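/- arXiv:math/0607673 — 8 statements merged into one kernel-verified Lean document; each statement's English description precedes it below -/
import Mathlib

section
/- Every strictly upper-triangular n×n complex matrix x with x² = 0 belongs to the conjugation orbit B·N_σ for exactly one involution σ of {1,…,n}. In other words, the variety of strictly upper-triangular matrices of square zero is the disjoint union over all involutions σ of the B-orbits B·N_σ. -/
open Matrix

/-- A matrix is strictly upper-triangular. -/
def StrictUpper {n : ℕ} (x : Matrix (Fin n) (Fin n) ℂ) : Prop :=
  ∀ a b : Fin n, b ≤ a → x a b = 0

/-- A matrix is (weakly) upper-triangular. -/
def UpperTri {n : ℕ} (x : Matrix (Fin n) (Fin n) ℂ) : Prop :=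
  ∀ a b : Fin n, b < a → x a b = 0

/-- The orbit of a matrix under conjugation by invertible upper-triangular matrices. -/
def Borbit {n : ℕ} (x : Matrix (Fin n) (Fin n) ℂ) : Set (Matrix (Fin n) (Fin n) ℂ) :=
  {y | ∃ b : Matrix (Fin n) (Fin n) ℂ, IsUnit b ∧ UpperTri b ∧ y = b * x * b⁻¹}

/-- A permutation is an involution. -/
def IsInvol {n : ℕ} (σ : Equiv.Perm (Fin n)) : Prop := σ * σ = 1

/-- The strictly upper-triangular part `N_σ` of the permutation matrix of `σ`. -/
def Nmat {n : ℕ} (σ : Equiv.Perm (Fin n)) : Matrix (Fin n) (Fin n) ℂ :=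
  Matrix.of fun a b => if a < b ∧ σ a = b then (1 : ℂ) else 0

/-- The submatrix `π_{i,j}(x)` on rows and columns `i,…,j` (1-based), for `1 ≤ i ≤ j ≤ n`. -/
def blk {n : ℕ} (x : Matrix (Fin n) (Fin n) ℂ) (i j : ℕ)
    (h1 : 1 ≤ i) (h2 : i ≤ j) (h3 : j ≤ n) :
    Matrix (Fin (j + 1 - i)) (Fin (j + 1 - i)) ℂ :=
  Matrix.of fun a b =>
    x ⟨i - 1 + a.1, by have := a.2; omega⟩ ⟨i - 1 + b.1, by have := b.2; omega⟩

/-- The rank matrix of `N_σ` (1-based indices, 0 outside the range `1 ≤ i < j ≤ n`). -/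
noncomputable def Rfun {n : ℕ} (σ : Equiv.Perm (Fin n)) : ℕ → ℕ → ℕ := fun i j =>
  if h : 1 ≤ i ∧ i < j ∧ j ≤ n then (blk (Nmat σ) i j h.1 h.2.1.le h.2.2).rank
  else 0

/-- The number of two-cycles of an involution. -/
def numCycles {n : ℕ} (σ : Equiv.Perm (Fin n)) : ℕ :=
  (Finset.univ.filter fun a : Fin n => a < σ a).card

/-- Evaluation of a polynomial in the matrix entries at a matrix. -/
noncomputable def evalMat {n : ℕ} (x : Matrix (Fin n) (Fin n) ℂ)
    (f : MvPolynomial (Fin n × Fin n) ℂ) : ℂ :=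
  MvPolynomial.eval (fun p => x p.1 p.2) f

/-- The vanishing ideal of a set of matrices. -/
noncomputable def vanishingIdeal {n : ℕ} (S : Set (Matrix (Fin n) (Fin n) ℂ)) :
    Ideal (MvPolynomial (Fin n × Fin n) ℂ) where
  carrier := {f | ∀ x ∈ S, evalMat x f = 0}
  add_mem' := by
    intro a b ha hb x hx
    simp only [evalMat, map_add] at *
    rw [ha x hx, hb x hx, add_zero]
  zero_mem' := by
    intro x hx
    simp [evalMat]
  smul_mem' := by
    intro c f hf x hx
    simp only [evalMat, smul_eq_mul, _root_.map_mul] at *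
    rw [hf x hx, mul_zero]

/-- The Zariski closure of a set of matrices: the common zero set of its vanishing ideal. -/
noncomputable def zclosure {n : ℕ} (S : Set (Matrix (Fin n) (Fin n) ℂ)) :
    Set (Matrix (Fin n) (Fin n) ℂ) :=
  {x | ∀ f ∈ vanishingIdeal S, evalMat x f = 0}

/-- The space of upper-triangular matrices commuting with a given matrix
(the Lie algebra of the stabilizer of `N` in `B`). -/
noncomputable def commUT {n : ℕ} (N : Matrix (Fin n) (Fin n) ℂ) :
    Submodule ℂ (Matrix (Fin n) (Fin n) ℂ) where
  carrier := {z | UpperTri z ∧ z * N = N * z}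
  add_mem' := by
    rintro a b ⟨ha1, ha2⟩ ⟨hb1, hb2⟩
    refine ⟨fun p q h => ?_, by rw [add_mul, mul_add, ha2, hb2]⟩
    simp [Matrix.add_apply, ha1 p q h, hb1 p q h]
  zero_mem' := ⟨fun p q h => rfl, by simp⟩
  smul_mem' := by
    rintro c a ⟨ha1, ha2⟩
    refine ⟨fun p q h => ?_, by rw [Matrix.smul_mul, Matrix.mul_smul, ha2]⟩
    simp [Matrix.smul_apply, ha1 p q h]

/-!
Existence is by induction on `n`. Write `x = [[0, v], [0, x']]`; by induction `x'` is
`B`-conjugate to some `N_σ'`, and after that conjugation the first row `w` still satisfies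
`w N_σ' = 0` (this is `x² = 0`). Upper-triangular row operations then clear `w` except at its first
nonzero entry `k`, which is a fixed point of `σ'`, and the result is `N_σ` for the involution `σ`
that extends `σ'` by the two-cycle `(0 k+1)` (or by the fixed point `0` if `w` clears completely).

Uniqueness: conjugation by `B` preserves the rank of each submatrix with rows `≥ a` and columns
`≤ j`, and for `N_σ` this rank is the number of two-cycles `c < σ c` with `a ≤ c` and `σ c ≤ j`.
Comparing the counts for rows `≥ a` and rows `> a` tells whether `a < σ a ≤ j`, which determines
the involution `σ`.
-/

open Finset

namespace Matrix

section UpperTriangularBlocks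

variable {l m R : Type*} [LinearOrder m] [CommRing R]

theorem toBlock_mul_of_isUpperTriangular_left [Fintype m] {A : Matrix m m R}
    (hA : A.IsUpperTriangular) {p : m → Prop} [DecidablePred p] (hp : IsUpperSet {i | p i})
    (q : l → Prop) (B : Matrix m l R) :
    (A * B).toBlock p q = A.toBlock p p * B.toBlock p q := by
  have hzero : A.toBlock p (fun j => ¬p j) = 0 := by
    ext ⟨i, hi⟩ ⟨j, hj⟩
    exact hA (lt_of_not_ge fun hij => hj (hp hij hi))
  rw [toBlock_mul_eq_add p p q, hzero, Matrix.zero_mul, add_zero]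

theorem toBlock_mul_of_isUpperTriangular_right [Fintype m] {A : Matrix m m R}
    (hA : A.IsUpperTriangular) (p : l → Prop) {q : m → Prop} [DecidablePred q]
    (hq : IsLowerSet {i | q i}) (B : Matrix l m R) :
    (B * A).toBlock p q = B.toBlock p q * A.toBlock q q := by
  have hzero : A.toBlock (fun i => ¬q i) q = 0 := by
    ext ⟨i, hi⟩ ⟨j, hj⟩
    exact hA (lt_of_not_ge fun hji => hi (hq hji hj))
  rw [toBlock_mul_eq_add p q q, hzero, Matrix.mul_zero, add_zero]

theorem IsUpperTriangular.toBlock {A : Matrix m m R} (hA : A.IsUpperTriangular) (p : m → Prop) :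
    (A.toBlock p p).IsUpperTriangular :=
  fun _ _ hij => hA hij

theorem IsUpperTriangular.isUnit_det_toBlock [Fintype m] {A : Matrix m m R}
    (hA : A.IsUpperTriangular) (hdet : IsUnit A.det) (p : m → Prop) [DecidablePred p] :
    IsUnit (A.toBlock p p).det := by
  rw [det_of_isUpperTriangular hA, IsUnit.prod_univ_iff] at hdet
  rw [det_of_isUpperTriangular (hA.toBlock p), IsUnit.prod_univ_iff]
  exact fun i => hdet i

theorem rank_toBlock_eq_of_mul_eq [Fintype m] {A B C : Matrix m m R} (hC : C.IsUpperTriangular)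
    (hdet : IsUnit C.det) (h : C * A = B * C) {p q : m → Prop} [DecidablePred p]
    [DecidablePred q] (hp : IsUpperSet {i | p i}) (hq : IsLowerSet {i | q i}) :
    (A.toBlock p q).rank = (B.toBlock p q).rank := by
  classical
  calc (A.toBlock p q).rank = (C.toBlock p p * A.toBlock p q).rank :=
        (rank_mul_eq_right_of_isUnit_det _ _ (hC.isUnit_det_toBlock hdet p)).symm
    _ = (B.toBlock p q * C.toBlock q q).rank := by
        rw [← toBlock_mul_of_isUpperTriangular_left hC hp, h,
          toBlock_mul_of_isUpperTriangular_right hC p hq]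
    _ = (B.toBlock p q).rank :=
        rank_mul_eq_left_of_isUnit_det _ _ (hC.isUnit_det_toBlock hdet q)

end UpperTriangularBlocks

theorem rank_of_ite_eq_card {m n K : Type*} [Fintype m] [Fintype n] [DecidableEq m] [Field K]
    (r : m → n → Prop) [DecidableRel r] (hfun : ∀ a b b', r a b → r a b' → b = b')
    (hinj : ∀ a a' b, r a b → r a' b → a = a') :
    (of fun a b => if r a b then (1 : K) else 0).rank = Fintype.card {a // ∃ b, r a b} := by
  classical
  set M : Matrix m n K := of fun a b => if r a b then 1 else 0
  set D : Matrix m m K := diagonal fun a => if ∃ b, r a b then 1 else 0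
  have hDM : D * M = M := by
    ext a b
    by_cases hab : r a b
    · simp [D, M, hab, show ∃ b, r a b from ⟨b, hab⟩]
    · simp [D, M, hab]
  have hMM : M * Mᵀ = D := by
    ext a a'
    simp only [M, D, mul_apply, transpose_apply, of_apply, diagonal_apply, ite_mul, one_mul,
      zero_mul]
    by_cases ha : ∃ b, r a b
    · obtain ⟨b, hb⟩ := ha
      rw [Finset.sum_eq_single b (fun b' _ hb' => if_neg fun h => hb' (hfun _ _ _ h hb))
        (by simp)]
      by_cases haa : a = a'
      · subst haa
        simp [hb, show ∃ b, r a b from ⟨b, hb⟩]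
      · simp [hb, haa, show ¬r a' b from fun h => haa (hinj _ _ _ hb h)]
    · push Not at ha
      simp [ha]
  have hD : D.rank = Fintype.card {a // ∃ b, r a b} := by
    rw [rank_diagonal]
    exact Fintype.card_congr (Equiv.subtypeEquivRight fun a => by simp)
  apply le_antisymm
  · rw [← hD, ← hDM]; exact rank_mul_le_left _ _
  · rw [← hD, ← hMM]; exact rank_mul_le_left _ _

end Matrix

theorem Finset.card_filter_le_and {α : Type*} [Fintype α] [LinearOrder α] (a : α)
    (P : α → Prop) [DecidablePred P] :
    #{c | a ≤ c ∧ P c} = #{c | a < c ∧ P c} + if P a then 1 else 0 := by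
  by_cases hPa : P a
  · have hins : univ.filter (fun c => a ≤ c ∧ P c) =
        insert a (univ.filter fun c => a < c ∧ P c) := by
      ext c
      simp only [mem_filter, mem_univ, true_and, mem_insert, le_iff_eq_or_lt]
      grind
    rw [hins, card_insert_of_notMem (by simp), if_pos hPa]
  · rw [if_neg hPa, add_zero]
    congr 1
    ext c
    simp only [le_iff_eq_or_lt]
    grind

theorem Equiv.Perm.eq_of_forall_lt_and_apply_le_iff {α : Type*} [LinearOrder α]
    {σ τ : Equiv.Perm α} (hσ : Function.Involutive σ) (hτ : Function.Involutive τ)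
    (h : ∀ a j, a < σ a ∧ σ a ≤ j ↔ a < τ a ∧ τ a ≤ j) : σ = τ := by
  have key : ∀ {σ' τ' : Equiv.Perm α}, (∀ a j, a < σ' a ∧ σ' a ≤ j ↔ a < τ' a ∧ τ' a ≤ j) →
      ∀ a, a < σ' a → τ' a = σ' a := fun {σ' τ'} h a ha =>
    have hτa := (h a (σ' a)).1 ⟨ha, le_rfl⟩
    le_antisymm hτa.2 ((h a (τ' a)).2 ⟨hτa.1, le_rfl⟩).2
  have h' : ∀ a j, a < τ a ∧ τ a ≤ j ↔ a < σ a ∧ σ a ≤ j := fun a j => (h a j).symm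
  ext a
  rcases lt_trichotomy a (σ a) with hσa | hσa | hσa
  · exact (key h a hσa).symm
  · rcases lt_trichotomy a (τ a) with hτa | hτa | hτa
    · exact key h' a hτa
    · exact hσa.symm.trans hτa
    · have := key h' (τ a) (by rwa [hτ a])
      rw [hτ a] at this
      calc σ a = σ (σ (τ a)) := by rw [this]
        _ = τ a := hσ _
  · have := key h (σ a) (by rwa [hσ a])
    rw [hσ a] at this
    calc σ a = τ (τ (σ a)) := (hτ _).symm
      _ = τ a := by rw [this]

section Borbit

variable {n : ℕ}

theorem upperTri_iff_isUpperTriangular {b : Matrix (Fin n) (Fin n) ℂ} :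
    UpperTri b ↔ b.IsUpperTriangular :=
  ⟨fun h _ _ hij => h _ _ hij, fun h _ _ hij => h hij⟩

theorem mem_Borbit_iff {x y : Matrix (Fin n) (Fin n) ℂ} :
    y ∈ Borbit x ↔ ∃ b : Matrix (Fin n) (Fin n) ℂ, IsUnit b.det ∧ UpperTri b ∧ b * x = y * b := by
  simp only [Borbit, Set.mem_ofPred_eq, isUnit_iff_isUnit_det]
  constructor
  · rintro ⟨b, hb, hbt, rfl⟩
    exact ⟨b, hb, hbt, (nonsing_inv_mul_cancel_right b _ hb).symm⟩
  · rintro ⟨b, hb, hbt, h⟩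
    exact ⟨b, hb, hbt, by rw [h, mul_nonsing_inv_cancel_right b _ hb]⟩

theorem mem_Borbit_self (x : Matrix (Fin n) (Fin n) ℂ) : x ∈ Borbit x :=
  mem_Borbit_iff.2 ⟨1, by simp, fun _ _ h => one_apply_ne h.ne', by simp⟩

theorem mem_Borbit_symm {x y : Matrix (Fin n) (Fin n) ℂ} (h : y ∈ Borbit x) : x ∈ Borbit y := by
  obtain ⟨b, hb, hbt, hbx⟩ := mem_Borbit_iff.1 h
  have := b.invertibleOfIsUnitDet hb
  refine mem_Borbit_iff.2 ⟨b⁻¹, isUnit_nonsing_inv_det b hb, upperTri_iff_isUpperTriangular.2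
    (blockTriangular_inv_of_blockTriangular (upperTri_iff_isUpperTriangular.1 hbt)), ?_⟩
  calc b⁻¹ * y = b⁻¹ * (y * b) * b⁻¹ := by
        rw [← Matrix.mul_assoc b⁻¹ y b, mul_nonsing_inv_cancel_right b _ hb]
    _ = x * b⁻¹ := by rw [← hbx, nonsing_inv_mul_cancel_left b _ hb]

theorem mem_Borbit_trans {x y z : Matrix (Fin n) (Fin n) ℂ} (hxy : y ∈ Borbit x)
    (hyz : z ∈ Borbit y) : z ∈ Borbit x := by
  obtain ⟨b, hb, hbt, hbx⟩ := mem_Borbit_iff.1 hxy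
  obtain ⟨c, hc, hct, hcy⟩ := mem_Borbit_iff.1 hyz
  refine mem_Borbit_iff.2 ⟨c * b, by rw [det_mul]; exact hc.mul hb,
    upperTri_iff_isUpperTriangular.2 ((upperTri_iff_isUpperTriangular.1 hct).mul
      (upperTri_iff_isUpperTriangular.1 hbt)), ?_⟩
  rw [Matrix.mul_assoc, hbx, ← Matrix.mul_assoc, hcy, Matrix.mul_assoc]

theorem rank_toBlock_eq_of_mem_Borbit {x y : Matrix (Fin n) (Fin n) ℂ} (h : y ∈ Borbit x)
    {p q : Fin n → Prop} [DecidablePred p] [DecidablePred q] (hp : IsUpperSet {i | p i})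
    (hq : IsLowerSet {i | q i}) : (x.toBlock p q).rank = (y.toBlock p q).rank := by
  obtain ⟨b, hb, hbt, hbx⟩ := mem_Borbit_iff.1 h
  exact rank_toBlock_eq_of_mul_eq (upperTri_iff_isUpperTriangular.1 hbt) hb hbx hp hq

end Borbit

section Nmat

variable {n : ℕ}

theorem IsInvol.involutive {σ : Equiv.Perm (Fin n)} (hσ : IsInvol σ) : Function.Involutive σ :=
  fun a => congr($hσ a)

theorem IsInvol.apply_eq_iff_eq_apply {σ : Equiv.Perm (Fin n)} (hσ : IsInvol σ) {a b : Fin n} :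
    σ a = b ↔ a = σ b :=
  ⟨fun h => h ▸ (hσ.involutive a).symm, fun h => h ▸ hσ.involutive b⟩

theorem vecMul_Nmat {σ : Equiv.Perm (Fin n)} (hσ : IsInvol σ) (u : Fin n → ℂ) (j : Fin n) :
    (u ᵥ* Nmat σ) j = if σ j < j then u (σ j) else 0 := by
  simp only [vecMul, dotProduct, Nmat, of_apply, mul_ite, mul_one, mul_zero,
    hσ.apply_eq_iff_eq_apply, and_comm (a := _ < j)]
  simp [ite_and]

theorem Nmat_mulVec (σ : Equiv.Perm (Fin n)) (u : Fin n → ℂ) (i : Fin n) :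
    (Nmat σ *ᵥ u) i = if i < σ i then u (σ i) else 0 := by
  simp only [mulVec, dotProduct, Nmat, of_apply, ite_mul, one_mul, zero_mul,
    and_comm (a := i < _)]
  simp [ite_and]

theorem rank_toBlock_Nmat (σ : Equiv.Perm (Fin n)) (p q : Fin n → Prop) [DecidablePred p]
    [DecidablePred q] : ((Nmat σ).toBlock p q).rank = #{c | p c ∧ c < σ c ∧ q (σ c)} := by
  set r : {c // p c} → {c // q c} → Prop := fun a b => (a : Fin n) < b ∧ σ a = b
  have hfun : ∀ a b b', r a b → r a b' → b = b' := fun a b b' hb hb' =>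
    Subtype.ext (hb.2.symm.trans hb'.2)
  have hinj : ∀ a a' b, r a b → r a' b → a = a' := fun a a' b ha ha' =>
    Subtype.ext (σ.injective (ha.2.trans ha'.2.symm))
  rw [show (Nmat σ).toBlock p q = of fun a b => if r a b then 1 else 0 from rfl,
    rank_of_ite_eq_card _ hfun hinj, ← Fintype.card_subtype]
  refine Fintype.card_congr ((Equiv.subtypeEquivRight fun a => ?_).trans
    (Equiv.subtypeSubtypeEquivSubtypeInter p fun c => c < σ c ∧ q (σ c)))
  exact ⟨fun ⟨b, hab, hb⟩ => hb ▸ ⟨hab, b.2⟩, fun hc => ⟨⟨σ a, hc.2⟩, hc.1, rfl⟩⟩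

theorem eq_of_Nmat_mem_Borbit {σ τ : Equiv.Perm (Fin n)} (hσ : IsInvol σ) (hτ : IsInvol τ)
    (h : Nmat τ ∈ Borbit (Nmat σ)) : σ = τ := by
  refine Equiv.Perm.eq_of_forall_lt_and_apply_le_iff hσ.involutive hτ.involutive fun a j => ?_
  have hcard : ∀ (p : Fin n → Prop) [DecidablePred p], IsUpperSet {c | p c} →
      #{c | p c ∧ c < σ c ∧ σ c ≤ j} = #{c | p c ∧ c < τ c ∧ τ c ≤ j} := by
    intro p _ hp
    rw [← rank_toBlock_Nmat σ p (· ≤ j), ← rank_toBlock_Nmat τ p (· ≤ j)]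
    exact rank_toBlock_eq_of_mem_Borbit h hp (isLowerSet_Iic j)
  have hle := hcard (a ≤ ·) (isUpperSet_Ici a)
  rw [card_filter_le_and, card_filter_le_and, hcard (a < ·) (isUpperSet_Ioi a)] at hle
  have := add_left_cancel hle
  split_ifs at this <;> tauto

end Nmat

namespace Matrix

variable {n : ℕ} {R : Type*} [CommRing R]

theorem commute_one_add_vecMulVec {m : Type*} [Fintype m] [DecidableEq m] {N : Matrix m m R}
    {e w : m → R} (he : N *ᵥ e = 0) (hw : w ᵥ* N = 0) : Commute (1 + vecMulVec e w) N := by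
  rw [Commute, SemiconjBy, Matrix.add_mul, Matrix.mul_add, vecMulVec_mul, mul_vecMulVec, he, hw,
    Matrix.one_mul, Matrix.mul_one, zero_vecMulVec, vecMulVec_zero]

/-- The block matrix `[[a, u], [0, c]]`. -/
def upperBorder (a : R) (u : Fin n → R) (c : Matrix (Fin n) (Fin n) R) :
    Matrix (Fin (n + 1)) (Fin (n + 1)) R :=
  of (Fin.cons (Fin.cons a u) fun i => Fin.cons 0 (c i))

section UpperBorder

variable (a : R) (u : Fin n → R) (c : Matrix (Fin n) (Fin n) R)

@[simp] theorem upperBorder_zero_zero : upperBorder a u c 0 0 = a := rfl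

@[simp] theorem upperBorder_zero_succ (j : Fin n) : upperBorder a u c 0 j.succ = u j := by
  simp [upperBorder]

@[simp] theorem upperBorder_succ_zero (i : Fin n) : upperBorder a u c i.succ 0 = 0 := by
  simp [upperBorder]

@[simp] theorem upperBorder_succ_succ (i j : Fin n) : upperBorder a u c i.succ j.succ = c i j := by
  simp [upperBorder]

@[simp] theorem submatrix_succ_upperBorder :
    (upperBorder a u c).submatrix Fin.succ Fin.succ = c := by
  ext i j
  simp

theorem eq_upperBorder {A : Matrix (Fin (n + 1)) (Fin (n + 1)) R} (h0 : A 0 0 = a)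
    (hA : ∀ i : Fin n, A i.succ 0 = 0) :
    A = upperBorder a (fun j => A 0 j.succ) (A.submatrix Fin.succ Fin.succ) := by
  ext i j
  cases i using Fin.cases <;> cases j using Fin.cases <;> simp [h0, hA]

theorem upperBorder_eq_zero_iff : upperBorder a u c = 0 ↔ a = 0 ∧ u = 0 ∧ c = 0 := by
  refine ⟨fun h => ⟨?_, funext fun j => ?_, ext fun i j => ?_⟩, ?_⟩
  · simpa using congr($h 0 0)
  · simpa using congr($h 0 j.succ)
  · simpa using congr($h i.succ j.succ)
  · rintro ⟨rfl, rfl, rfl⟩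
    ext i j
    cases i using Fin.cases <;> cases j using Fin.cases <;> simp

theorem upperBorder_mul (b : R) (v : Fin n → R) (d : Matrix (Fin n) (Fin n) R) :
    upperBorder a u c * upperBorder b v d = upperBorder (a * b) (a • v + u ᵥ* d) (c * d) := by
  ext i j
  cases i using Fin.cases <;> cases j using Fin.cases <;>
    simp [mul_apply, Fin.sum_univ_succ, vecMul, dotProduct]

theorem det_upperBorder : (upperBorder a u c).det = a * c.det := by
  rw [det_succ_column_zero, Fin.sum_univ_succ]
  simp

theorem IsUpperTriangular.upperBorder {c : Matrix (Fin n) (Fin n) R} (hc : c.IsUpperTriangular) :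
    (upperBorder a u c).IsUpperTriangular := by
  intro i j hij
  cases i using Fin.cases with
  | zero => exact absurd hij (Fin.not_lt_zero j)
  | succ i =>
    cases j using Fin.cases with
    | zero => simp
    | succ j => exact hc (Fin.succ_lt_succ_iff.1 hij)

end UpperBorder

end Matrix

section Existence

variable {n : ℕ}

theorem isInvol_decomposeFin_symm {σ : Equiv.Perm (Fin n)} (hσ : IsInvol σ) {p : Fin (n + 1)}
    (hp : ∀ k, p = k.succ → σ k = k) : IsInvol (Equiv.Perm.decomposeFin.symm (p, σ)) := by
  refine Equiv.ext fun i => ?_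
  cases p using Fin.cases with
  | zero => cases i using Fin.cases <;> simp [hσ.involutive _]
  | succ k =>
    have hk := hp k rfl
    cases i using Fin.cases with
    | zero => simp [hk]
    | succ i =>
      by_cases hik : i = k
      · subst hik
        simp [hk]
      · have hσik : σ i ≠ k := fun h => hik (by rw [← hk, ← h, hσ.involutive])
        simp [Equiv.swap_apply_of_ne_of_ne, hik, hσik, hσ.involutive _]

theorem Nmat_decomposeFin_symm {σ : Equiv.Perm (Fin n)} {p : Fin (n + 1)}
    (hp : ∀ k, p = k.succ → σ k = k) :
    Nmat (Equiv.Perm.decomposeFin.symm (p, σ)) =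
      upperBorder 0 (fun j => if j.succ = p then 1 else 0) (Nmat σ) := by
  ext i j
  cases i using Fin.cases <;> cases j using Fin.cases
  · simp [Nmat]
  · simp [Nmat, eq_comm]
  · simp [Nmat]
  case succ.succ i j =>
    simp only [Nmat, of_apply, upperBorder_succ_succ, Fin.succ_lt_succ_iff,
      Equiv.Perm.decomposeFin_symm_apply_succ]
    refine if_congr (and_congr_right fun hij => ?_) rfl rfl
    by_cases hσp : (σ i).succ = p
    · have hfix : σ i = i := σ.injective (hp _ hσp.symm)
      rw [hσp, Equiv.swap_apply_right, hfix]
      simp [hij.ne, (Fin.succ_ne_zero j).symm]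
    · rw [Equiv.swap_apply_of_ne_of_ne (Fin.succ_ne_zero _) hσp, Fin.succ_inj]

theorem upperBorder_mem_Borbit {c N N' : Matrix (Fin n) (Fin n) ℂ} {u v w : Fin n → ℂ}
    (hc : IsUnit c.det) (hct : UpperTri c) (hN : c * N = N' * c) (hw : v + u ᵥ* N = w ᵥ* c) :
    upperBorder 0 w N' ∈ Borbit (upperBorder 0 v N) :=
  mem_Borbit_iff.2 ⟨upperBorder 1 u c, by rwa [det_upperBorder, one_mul],
    upperTri_iff_isUpperTriangular.2 ((upperTri_iff_isUpperTriangular.1 hct).upperBorder 1 u),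
    by simp [upperBorder_mul, hN, hw]⟩

/-- Shearing by `[[1, -w ∘ σ], [0, 1]]` clears the first row at the larger point of every
two-cycle; `w ᵥ* N_σ = 0` says it already vanishes at the smaller one. -/
theorem upperBorder_fixedPart_mem_Borbit {σ : Equiv.Perm (Fin n)} (hσ : IsInvol σ)
    {w : Fin n → ℂ} (hw : w ᵥ* Nmat σ = 0) :
    upperBorder 0 (fun j => if σ j = j then w j else 0) (Nmat σ) ∈
      Borbit (upperBorder 0 w (Nmat σ)) := by
  refine upperBorder_mem_Borbit (c := 1) (u := -(w ∘ σ)) (by simp)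
    (fun _ _ h => one_apply_ne h.ne') (by simp) ?_
  have hsmall : ∀ a, a < σ a → w a = 0 := fun a ha => by
    simpa [vecMul_Nmat hσ, hσ.involutive a, ha] using congr_fun hw (σ a)
  ext j
  rw [vecMul_one, Pi.add_apply, vecMul_Nmat hσ]
  rcases lt_trichotomy (σ j) j with h | h | h
  · simp [h, h.ne, hσ.involutive j]
  · simp [h]
  · simp [h.not_gt, h.ne', hsmall j h]

/-- The witness is the identity matrix with row `k` replaced by `v`. -/
theorem exists_upperTri_commute_Nmat_single_vecMul_eq {σ : Equiv.Perm (Fin n)} (hσ : IsInvol σ)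
    {v : Fin n → ℂ} (hv : ∀ j, σ j ≠ j → v j = 0) {k : Fin n} (hk : v k ≠ 0)
    (hmin : ∀ j < k, v j = 0) :
    ∃ h : Matrix (Fin n) (Fin n) ℂ, IsUnit h.det ∧ UpperTri h ∧ h * Nmat σ = Nmat σ * h ∧
      Pi.single k 1 ᵥ* h = v := by
  have hk_fix : σ k = k := by_contra fun h => hk (hv k h)
  set e : Fin n → ℂ := Pi.single k 1
  have hvN : v ᵥ* Nmat σ = 0 := by
    ext j
    rw [vecMul_Nmat hσ]
    split_ifs with hj
    · exact hv _ fun hfix => hj.ne ((hσ.involutive j).symm.trans hfix).symm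
    · rfl
  have heN : e ᵥ* Nmat σ = 0 := by
    ext j
    rw [vecMul_Nmat hσ]
    split_ifs with hj
    · exact Pi.single_eq_of_ne
        (fun h => hj.ne (h.trans ((hσ.apply_eq_iff_eq_apply.1 h).trans hk_fix).symm)) _
    · rfl
  have hNe : Nmat σ *ᵥ e = 0 := by
    ext i
    rw [Nmat_mulVec]
    split_ifs with hi
    · exact Pi.single_eq_of_ne (fun h => hi.ne (by rw [h, σ.injective (h.trans hk_fix.symm)])) _
    · rfl
  refine ⟨1 + vecMulVec e (v - e), ?_, fun i j hji => ?_,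
    (commute_one_add_vecMulVec hNe (by rw [sub_vecMul, hvN, heN, sub_zero])).eq, ?_⟩
  · rw [vecMulVec_eq Unit, det_one_add_replicateCol_mul_replicateRow]
    simpa [e] using hk.isUnit
  · by_cases hik : i = k
    · subst hik
      simp [e, vecMulVec_apply, one_apply_ne hji.ne', hji.ne, hmin j hji]
    · simp [e, vecMulVec_apply, one_apply_ne hji.ne', hik]
  · simp [e, vecMul_add, vecMul_vecMulVec]

theorem exists_Nmat_mem_Borbit_upperBorder {σ : Equiv.Perm (Fin n)} (hσ : IsInvol σ)
    {v : Fin n → ℂ} (hv : ∀ j, σ j ≠ j → v j = 0) :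
    ∃ τ : Equiv.Perm (Fin (n + 1)), IsInvol τ ∧ Nmat τ ∈ Borbit (upperBorder 0 v (Nmat σ)) := by
  by_cases hv0 : v = 0
  · have hp : ∀ k : Fin n, 0 = k.succ → σ k = k := fun k hk =>
      absurd hk.symm (Fin.succ_ne_zero k)
    refine ⟨_, isInvol_decomposeFin_symm hσ hp, ?_⟩
    have hrow : (fun j : Fin n => if j.succ = 0 then (1 : ℂ) else 0) = v :=
      hv0 ▸ funext fun j => if_neg (Fin.succ_ne_zero j)
    rw [Nmat_decomposeFin_symm hp, hrow]
    exact mem_Borbit_self _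
  · obtain ⟨j, hj⟩ := Function.ne_iff.1 hv0
    obtain ⟨k, hk, hmin⟩ : ∃ k, v k ≠ 0 ∧ ∀ i < k, v i = 0 :=
      ⟨_, wellFounded_lt.min_mem {i | v i ≠ 0} ⟨j, hj⟩,
        fun i hi => by_contra fun h => wellFounded_lt.not_lt_min {i | v i ≠ 0} h hi⟩
    obtain ⟨h, hdet, hupper, hcomm, hrow⟩ :=
      exists_upperTri_commute_Nmat_single_vecMul_eq hσ hv hk hmin
    have hp : ∀ i : Fin n, k.succ = i.succ → σ i = i := fun i hi =>
      Fin.succ_inj.1 hi ▸ by_contra fun h => hk (hv k h)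
    refine ⟨_, isInvol_decomposeFin_symm hσ hp, ?_⟩
    have he : (fun j : Fin n => if j.succ = k.succ then (1 : ℂ) else 0) = Pi.single k 1 :=
      funext fun j => by simp [Pi.single_apply]
    rw [Nmat_decomposeFin_symm hp, he]
    exact upperBorder_mem_Borbit (u := 0) hdet hupper hcomm (by rw [zero_vecMul, add_zero, hrow])

theorem exists_isInvol_mem_Borbit : ∀ {n : ℕ} (x : Matrix (Fin n) (Fin n) ℂ), StrictUpper x →
    x * x = 0 → ∃ σ : Equiv.Perm (Fin n), IsInvol σ ∧ x ∈ Borbit (Nmat σ)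
  | 0, x, _, _ => ⟨1, mul_one 1, Subsingleton.elim (Nmat 1) x ▸ mem_Borbit_self _⟩
  | n + 1, x, hx, hx2 => by
    set x' := x.submatrix Fin.succ Fin.succ
    set v : Fin n → ℂ := fun j => x 0 j.succ
    have hxb : x = upperBorder 0 v x' :=
      eq_upperBorder _ (hx 0 0 le_rfl) fun i => hx _ _ (Fin.zero_le _)
    rw [hxb, upperBorder_mul, upperBorder_eq_zero_iff] at hx2
    obtain ⟨-, hvx, hx'2⟩ := hx2
    rw [zero_smul, zero_add] at hvx
    obtain ⟨σ', hσ', hx'σ'⟩ :=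
      exists_isInvol_mem_Borbit x' (fun a b hab => hx _ _ (Fin.succ_le_succ_iff.2 hab)) hx'2
    obtain ⟨c, hc, hct, hcN⟩ := mem_Borbit_iff.1 hx'σ'
    have hconj : x ∈ Borbit (upperBorder 0 (v ᵥ* c) (Nmat σ')) :=
      hxb ▸ upperBorder_mem_Borbit (u := 0) hc hct hcN (by simp)
    have hw : (v ᵥ* c) ᵥ* Nmat σ' = 0 := by
      rw [vecMul_vecMul, hcN, ← vecMul_vecMul, hvx, zero_vecMul]
    obtain ⟨σ, hσ, hσmem⟩ := exists_Nmat_mem_Borbit_upperBorder hσ' (v := fun j =>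
      if σ' j = j then (v ᵥ* c) j else 0) fun j hj => if_neg hj
    exact ⟨σ, hσ, mem_Borbit_trans (mem_Borbit_symm
      (mem_Borbit_trans (upperBorder_fixedPart_mem_Borbit hσ' hw) hσmem)) hconj⟩

end Existence

theorem stmt0_general (n : ℕ) (x : Matrix (Fin n) (Fin n) ℂ)
    (hx : StrictUpper x) (hx2 : x * x = 0) :
    ∃! σ : Equiv.Perm (Fin n), IsInvol σ ∧ x ∈ Borbit (Nmat σ) := by
  obtain ⟨σ, hσ, hxσ⟩ := exists_isInvol_mem_Borbit x hx hx2
  exact ⟨σ, ⟨hσ, hxσ⟩, fun τ ⟨hτ, hxτ⟩ =>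
    (eq_of_Nmat_mem_Borbit hσ hτ (mem_Borbit_trans hxσ (mem_Borbit_symm hxτ))).symm⟩

/-- every strictly upper-triangular `x` with `x² = 0` lies in `B·N_σ`
for exactly one involution `σ`. -/
theorem stmt0 (n : ℕ) (hn : 1 ≤ n) (x : Matrix (Fin n) (Fin n) ℂ)
    (hx : StrictUpper x) (hx2 : x * x = 0) :
    ∃! σ : Equiv.Perm (Fin n), IsInvol σ ∧ x ∈ Borbit (Nmat σ) :=
  stmt0_general n x hx hx2
end

section
/- Let σ be an involution of {1,…,n} with exactly k two-cycles, written σ = (i_1,j_1)⋯(i_k,j_k) with i_s < j_s for all s and i_1 < i_2 < ⋯ < i_k, and set r_s(σ) := #{p : i_p < i_s and j_p < j_s} + #{p : j_p < i_s}. Then the dimension over ℂ of the vector space of (not necessarily strictly) upper-triangular n×n complex matrices z satisfying z·N_σ = N_σ·z equals n(n+1)/2 − (kn − Σ_{s=1}^{k}(j_s − i_s) − Σ_{s=1}^{k} r_s(σ)). (This space is the Lie algebra of the stabilizer of N_σ in B, so since dim B = n(n+1)/2 this identity is equivalent to the paper's formula dim B·N_σ = kn − Σ_{s=1}^{k}(j_s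 − i_s) − Σ_{s=1}^{k} r_s(σ).) -/
open Matrix

/-!
Write `I` and `J` for the smaller and the larger ends of the two-cycles of `σ`. Entrywise,
`z * N_σ = N_σ * z` says that `z` vanishes on rows in `J` outside columns in `J` and on columns
in `I` outside rows in `I`, and that `z (σ a) (σ b) = z a b` for `a, b ∈ I`. Hence an
upper-triangular solution is freely determined by its entries `(a, b)` with `a ≤ b`, `a ∉ J`,
and, if `b ∈ I`, also `a ∈ I` and `σ a ≤ σ b`. Counting these positions by inclusion–exclusion
over the pairs `a ≤ b` gives the formula.
-/

open Finset

theorem card_filter_prod_snd_mem_eq_sum {α β : Type*} [Fintype α] [Fintype β] [DecidableEq β]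
    (s : Finset β) (P : α → β → Prop) [∀ a b, Decidable (P a b)] :
    #{p : α × β | p.2 ∈ s ∧ P p.1 p.2} = ∑ b ∈ s, #{a | P a b} := by
  simp only [card_filter, Fintype.sum_prod_type_right, ite_and, sum_ite_irrel, sum_const_zero]
  rw [sum_ite_mem, univ_inter]

theorem card_filter_mem_image_univ {α β : Type*} [Fintype α] [Fintype β] [DecidableEq α]
    {f : β → α} (hf : Function.Injective f) (P : α → Prop) [DecidablePred P] :
    #{a | a ∈ univ.image f ∧ P a} = #{x | P (f x)} := by
  rw [← filter_filter, filter_univ_mem, filter_image, card_image_of_injective _ hf]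

theorem Fin.card_filter_fst_le_snd (n : ℕ) :
    #{p : Fin n × Fin n | p.1 ≤ p.2} = n * (n + 1) / 2 := by
  have h := card_filter_prod_snd_mem_eq_sum univ fun a b : Fin n => a ≤ b
  simp only [mem_univ, true_and, filter_ge_eq_Iic, Fin.card_Iic] at h
  rw [h, Fin.sum_univ_eq_sum_range (· + 1)]
  simpa [sum_range_id, mul_comm] using (sum_range_succ' (fun i => i) n).symm

theorem IsInvol.apply_apply {n : ℕ} {σ : Equiv.Perm (Fin n)} (hσ : IsInvol σ) (a : Fin n) :
    σ (σ a) = a :=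
  DFunLike.congr_fun hσ a

section Arcs

variable {n : ℕ} (σ : Equiv.Perm (Fin n))

-- For an involution these are the ends `i_s` and `j_s` of its two-cycles.
def openers : Finset (Fin n) := {a | a < σ a}

def closers : Finset (Fin n) := {a | σ a < a}

variable {σ}

@[simp] theorem mem_openers {a : Fin n} : a ∈ openers σ ↔ a < σ a := by simp [openers]

@[simp] theorem mem_closers {a : Fin n} : a ∈ closers σ ↔ σ a < a := by simp [closers]

theorem notMem_closers_of_mem_openers {a : Fin n} (ha : a ∈ openers σ) : a ∉ closers σ := by
  simpa using (mem_openers.1 ha).not_gt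

theorem IsInvol.apply_mem_openers_iff (hσ : IsInvol σ) {a : Fin n} :
    σ a ∈ openers σ ↔ a ∈ closers σ := by
  simp [hσ.apply_apply]

theorem IsInvol.apply_mem_closers_iff (hσ : IsInvol σ) {a : Fin n} :
    σ a ∈ closers σ ↔ a ∈ openers σ := by
  simp [hσ.apply_apply]

theorem IsInvol.image_openers (hσ : IsInvol σ) : (openers σ).image σ = closers σ := by
  ext a
  refine ⟨fun h => ?_, fun h => mem_image.2 ⟨σ a, hσ.apply_mem_openers_iff.2 h, hσ.apply_apply a⟩⟩
  obtain ⟨b, hb, rfl⟩ := mem_image.1 h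
  exact hσ.apply_mem_closers_iff.2 hb

end Arcs

section Commutant

variable {n : ℕ} {σ : Equiv.Perm (Fin n)}

theorem Nmat_mul_apply (z : Matrix (Fin n) (Fin n) ℂ) (a b : Fin n) :
    (Nmat σ * z) a b = if a < σ a then z (σ a) b else 0 := by
  rw [Matrix.mul_apply, sum_eq_single (σ a) (fun c _ hc => by simp [Nmat, Ne.symm hc])
    (by simp)]
  simp [Nmat]

theorem mul_Nmat_apply (hσ : IsInvol σ) (z : Matrix (Fin n) (Fin n) ℂ) (a b : Fin n) :
    (z * Nmat σ) a b = if σ b < b then z a (σ b) else 0 := by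
  have hσ_ne {c : Fin n} (hc : c ≠ σ b) : σ c ≠ b := fun h => hc (by rw [← h, hσ.apply_apply])
  rw [Matrix.mul_apply, sum_eq_single (σ b) (fun c _ hc => by simp [Nmat, hσ_ne hc])
    (by simp)]
  simp [Nmat, hσ.apply_apply]

theorem mem_commUT_Nmat_iff (hσ : IsInvol σ) {z : Matrix (Fin n) (Fin n) ℂ} :
    z ∈ commUT (Nmat σ) ↔ UpperTri z ∧
      (∀ a ∈ closers σ, ∀ b ∉ closers σ, z a b = 0) ∧
      (∀ a ∉ openers σ, ∀ b ∈ openers σ, z a b = 0) ∧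
      (∀ a ∈ openers σ, ∀ b ∈ openers σ, z (σ a) (σ b) = z a b) := by
  have hσσ := hσ.apply_apply
  refine and_congr_right fun _ => ?_
  rw [← Matrix.ext_iff]
  simp only [mul_Nmat_apply hσ, Nmat_mul_apply, mem_openers, mem_closers]
  constructor
  · intro h
    refine ⟨fun a ha b hb => ?_, fun a ha b hb => ?_, fun a ha b hb => ?_⟩
    · simpa [hb, hσσ, ha] using (h (σ a) b).symm
    · simpa [hσσ, hb, ha] using h a (σ b)
    · simpa [hσσ, hb, ha] using (h a (σ b)).symm
  · rintro ⟨hJ, hI, hII⟩ a b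
    split_ifs with hb ha ha
    · simpa [hσσ] using (hII a ha (σ b) (by rwa [hσσ])).symm
    · exact hI a ha (σ b) (by rwa [hσσ])
    · exact (hJ (σ a) (by rwa [hσσ]) b hb).symm
    · rfl

end Commutant

section FreeEntries

variable {n : ℕ} (σ : Equiv.Perm (Fin n))

def freeEntries : Finset (Fin n × Fin n) :=
  {p | p.1 ≤ p.2 ∧ p.1 ∉ closers σ ∧ (p.2 ∈ openers σ → p.1 ∈ openers σ ∧ σ p.1 ≤ σ p.2)}

def restrictFree : commUT (Nmat σ) →ₗ[ℂ] (freeEntries σ → ℂ) where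
  toFun z p := (z : Matrix (Fin n) (Fin n) ℂ) p.1.1 p.1.2
  map_add' _ _ := rfl
  map_smul' _ _ := rfl

variable {σ}

theorem mem_freeEntries {a b : Fin n} : (a, b) ∈ freeEntries σ ↔
    a ≤ b ∧ a ∉ closers σ ∧ (b ∈ openers σ → a ∈ openers σ ∧ σ a ≤ σ b) := by
  simp only [freeEntries, mem_filter, mem_univ, true_and]

theorem restrictFree_injective (hσ : IsInvol σ) : Function.Injective (restrictFree σ) := by
  rw [← LinearMap.ker_eq_bot, LinearMap.ker_eq_bot']
  rintro ⟨z, hz⟩ h0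
  obtain ⟨hUT, hJ, hI, hII⟩ := (mem_commUT_Nmat_iff hσ).1 hz
  have hfree {a b : Fin n} (h : (a, b) ∈ freeEntries σ) : z a b = 0 :=
    congrFun h0 ⟨(a, b), h⟩
  ext a b
  show z a b = 0
  rcases lt_or_ge b a with hba | hab
  · exact hUT a b hba
  by_cases haJ : a ∈ closers σ
  · by_cases hbJ : b ∈ closers σ
    · have hσa : σ a ∈ openers σ := hσ.apply_mem_openers_iff.2 haJ
      have hσb : σ b ∈ openers σ := hσ.apply_mem_openers_iff.2 hbJ
      rw [← hσ.apply_apply a, ← hσ.apply_apply b, hII _ hσa _ hσb]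
      rcases lt_or_ge (σ b) (σ a) with h | h
      · exact hUT _ _ h
      · refine hfree (mem_freeEntries.2 ⟨h, notMem_closers_of_mem_openers hσa, fun _ => ⟨hσa, ?_⟩⟩)
        rwa [hσ.apply_apply, hσ.apply_apply]
    · exact hJ a haJ b hbJ
  · by_cases hbI : b ∈ openers σ
    · by_cases haI : a ∈ openers σ
      · rcases lt_or_ge (σ b) (σ a) with h | h
        · rw [← hII a haI b hbI]
          exact hUT _ _ h
        · exact hfree (mem_freeEntries.2 ⟨hab, haJ, fun _ => ⟨haI, h⟩⟩)
      · exact hI a haI b hbI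
    · exact hfree (mem_freeEntries.2 ⟨hab, haJ, fun h => absurd h hbI⟩)

theorem restrictFree_surjective (hσ : IsInvol σ) : Function.Surjective (restrictFree σ) := by
  intro c
  set c' : Fin n × Fin n → ℂ := Function.extend Subtype.val c 0
  have hc'_free (p : freeEntries σ) : c' p = c p := Subtype.val_injective.extend_apply c 0 p
  have hc'_zero {a b : Fin n} (hp : (a, b) ∉ freeEntries σ) : c' (a, b) = 0 :=
    Function.extend_apply' _ _ _ fun ⟨q, hq⟩ => hp (hq ▸ q.2)
  let z : Matrix (Fin n) (Fin n) ℂ := Matrix.of fun a b =>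
    if a ∈ closers σ ∧ b ∈ closers σ then c' (σ a, σ b) else c' (a, b)
  have hz : z ∈ commUT (Nmat σ) := by
    refine (mem_commUT_Nmat_iff hσ).2 ⟨fun a b hba => ?_, fun a ha b hb => ?_,
      fun a ha b hb => ?_, fun a ha b hb => ?_⟩
    · simp only [z, Matrix.of_apply]
      split_ifs with h
      · refine hc'_zero fun hfree => hba.not_ge ?_
        have := ((mem_freeEntries.1 hfree).2.2 (hσ.apply_mem_openers_iff.2 h.2)).2
        rwa [hσ.apply_apply, hσ.apply_apply] at this
      · exact hc'_zero fun hfree => hba.not_ge (mem_freeEntries.1 hfree).1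
    · simp only [z, Matrix.of_apply, hb, and_false, if_false]
      exact hc'_zero fun hfree => (mem_freeEntries.1 hfree).2.1 ha
    · simp only [z, Matrix.of_apply, notMem_closers_of_mem_openers hb, and_false, if_false]
      exact hc'_zero fun hfree => ha ((mem_freeEntries.1 hfree).2.2 hb).1
    · simp only [z, Matrix.of_apply, hσ.apply_mem_closers_iff, ha, hb, and_self, if_true,
        hσ.apply_apply, notMem_closers_of_mem_openers ha, false_and, if_false]
  refine ⟨⟨z, hz⟩, funext fun p => ?_⟩
  show (if _ then _ else _) = _
  rw [if_neg fun h => (mem_freeEntries.1 p.2).2.1 h.1]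
  exact hc'_free p

theorem finrank_commUT_Nmat (hσ : IsInvol σ) :
    Module.finrank ℂ (commUT (Nmat σ)) = #(freeEntries σ) := by
  let e := LinearEquiv.ofBijective _ ⟨restrictFree_injective hσ, restrictFree_surjective hσ⟩
  rw [e.finrank_eq, Module.finrank_fintype_fun_eq_card, Fintype.card_coe]

end FreeEntries

section Counting

variable {n : ℕ} (σ : Equiv.Perm (Fin n))

-- The paper's `r_s(σ)` for the two-cycle `(b, σ b)`.
def leftArcCount (b : Fin n) : ℕ :=
  #{a | a ∈ openers σ ∧ a < b ∧ σ a < σ b} + #{a | a ∈ closers σ ∧ a < b}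

-- Inclusion–exclusion, checked pair by pair.
theorem card_freeEntries_add :
    #(freeEntries σ) + #{p : Fin n × Fin n | p.1 ∈ closers σ ∧ p.1 ≤ p.2} +
        #{p : Fin n × Fin n | p.2 ∈ openers σ ∧ p.1 < p.2} =
      #{p : Fin n × Fin n | p.1 ≤ p.2} +
        #{p : Fin n × Fin n | p.2 ∈ openers σ ∧ (p.1 ∈ openers σ ∧ p.1 < p.2 ∧ σ p.1 < σ p.2)} +
        #{p : Fin n × Fin n | p.2 ∈ openers σ ∧ (p.1 ∈ closers σ ∧ p.1 < p.2)} := by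
  simp only [freeEntries, card_filter, ← sum_add_distrib]
  refine sum_congr rfl fun ⟨a, b⟩ _ => ?_
  have hinj : a = b ↔ σ a = σ b := σ.injective.eq_iff.symm
  simp only [mem_openers, mem_closers, Fin.lt_def, Fin.le_def, Fin.ext_iff] at hinj ⊢
  split_ifs <;> omega

variable {σ}

theorem card_filter_fst_mem_closers_le (hσ : IsInvol σ) :
    #{p : Fin n × Fin n | p.1 ∈ closers σ ∧ p.1 ≤ p.2} = ∑ b ∈ openers σ, (n - σ b) := by
  have hswap : #{p : Fin n × Fin n | p.1 ∈ closers σ ∧ p.1 ≤ p.2} =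
      #{p : Fin n × Fin n | p.2 ∈ openers σ ∧ σ p.2 ≤ p.1} :=
    card_equiv ((Equiv.prodCongr σ (Equiv.refl _)).trans (Equiv.prodComm _ _)) fun p => by
      simp only [mem_filter, mem_univ, true_and, Equiv.trans_apply, Equiv.prodCongr_apply,
        Prod.map, Equiv.refl_apply, Equiv.prodComm_apply, Prod.swap, hσ.apply_mem_openers_iff,
        hσ.apply_apply]
  rw [hswap, card_filter_prod_snd_mem_eq_sum (openers σ) fun a b => σ b ≤ a]
  simp only [filter_le_eq_Ici, Fin.card_Ici]

theorem finrank_commUT_Nmat_add (hσ : IsInvol σ) :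
    Module.finrank ℂ (commUT (Nmat σ)) + ∑ b ∈ openers σ, (n - σ b + b) =
      n * (n + 1) / 2 + ∑ b ∈ openers σ, leftArcCount σ b := by
  have hcount := card_freeEntries_add σ
  rw [card_filter_fst_mem_closers_le hσ, Fin.card_filter_fst_le_snd,
    card_filter_prod_snd_mem_eq_sum (openers σ) fun a b => a < b,
    card_filter_prod_snd_mem_eq_sum (openers σ) fun a b => a ∈ openers σ ∧ a < b ∧ σ a < σ b,
    card_filter_prod_snd_mem_eq_sum (openers σ) fun a b => a ∈ closers σ ∧ a < b] at hcount
  simp only [filter_gt_eq_Iio, Fin.card_Iio] at hcount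
  rw [finrank_commUT_Nmat hσ]
  simp only [leftArcCount, sum_add_distrib]
  omega

end Counting

section TwoCycles

variable {n k : ℕ} {σ : Equiv.Perm (Fin n)} {i j : Fin k → Fin n}

theorem openers_eq_image (hσ : IsInvol σ) (hij : ∀ s, i s < j s) (hcyc : ∀ s, σ (i s) = j s)
    (hfix : ∀ a : Fin n, (∀ s, a ≠ i s ∧ a ≠ j s) → σ a = a) :
    openers σ = univ.image i := by
  ext a
  simp only [mem_openers, mem_image, mem_univ, true_and]
  refine ⟨fun ha => ?_, fun ⟨s, hs⟩ => hs ▸ hcyc s ▸ hij s⟩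
  by_contra hnot
  push Not at hnot
  by_cases hJ : ∃ s, j s = a
  · obtain ⟨s, rfl⟩ := hJ
    rw [← hcyc s, hσ.apply_apply] at ha
    exact (hcyc s ▸ hij s).not_gt ha
  · push Not at hJ
    exact ha.ne (hfix a fun s => ⟨(hnot s).symm, (hJ s).symm⟩).symm

theorem closers_eq_image (hσ : IsInvol σ) (hij : ∀ s, i s < j s) (hcyc : ∀ s, σ (i s) = j s)
    (hfix : ∀ a : Fin n, (∀ s, a ≠ i s ∧ a ≠ j s) → σ a = a) :
    closers σ = univ.image j := by
  rw [← hσ.image_openers, openers_eq_image hσ hij hcyc hfix, image_image]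
  exact congrArg (image · univ) (funext hcyc)

end TwoCycles

theorem stmt1_general (n k : ℕ) (σ : Equiv.Perm (Fin n)) (hσ : IsInvol σ)
    (i j : Fin k → Fin n)
    (hij : ∀ s, i s < j s) (hmono : StrictMono i)
    (hcyc : ∀ s, σ (i s) = j s)
    (hfix : ∀ a : Fin n, (∀ s, a ≠ i s ∧ a ≠ j s) → σ a = a) :
    (Module.finrank ℂ (commUT (Nmat σ)) : ℤ) =
      ((n * (n + 1) / 2 : ℕ) : ℤ) -
        ((k * n : ℤ) - (∑ s : Fin k, (((j s : ℕ) : ℤ) - ((i s : ℕ) : ℤ))) -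
          ∑ s : Fin k,
            (((Finset.univ.filter fun p : Fin k => i p < i s ∧ j p < j s).card : ℤ) +
             ((Finset.univ.filter fun p : Fin k => ((j p : ℕ) < (i s : ℕ))).card : ℤ))) := by
  have hI := openers_eq_image hσ hij hcyc hfix
  have hJ := closers_eq_image hσ hij hcyc hfix
  have hj : Function.Injective j := fun s t h => hmono.injective (by simpa [← hcyc] using h)
  have key := finrank_commUT_Nmat_add hσ
  rw [hI, sum_image hmono.injective.injOn, sum_image hmono.injective.injOn] at key
  simp only [leftArcCount, hcyc, hI, hJ, card_filter_mem_image_univ hmono.injective,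
    card_filter_mem_image_univ hj] at key
  have hcast (s : Fin k) : ((n - j s : ℕ) : ℤ) = n - ((j s : ℕ) : ℤ) :=
    Nat.cast_sub (j s).isLt.le
  have keyℤ := congrArg (Nat.cast : ℕ → ℤ) key
  simp only [Nat.cast_add, Nat.cast_sum, hcast, sum_add_distrib, sum_sub_distrib, sum_const,
    card_univ, Fintype.card_fin, nsmul_eq_mul] at keyℤ
  simp only [Fin.val_fin_lt, sum_add_distrib, sum_sub_distrib]
  linarith

/-- the dimension of the commutant of `N_σ` in upper-triangular matrices. -/
theorem stmt1 (n k : ℕ) (hn : 1 ≤ n) (σ : Equiv.Perm (Fin n)) (hσ : IsInvol σ)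
    (i j : Fin k → Fin n)
    (hij : ∀ s, i s < j s) (hmono : StrictMono i)
    (hcyc : ∀ s, σ (i s) = j s)
    (hfix : ∀ a : Fin n, (∀ s, a ≠ i s ∧ a ≠ j s) → σ a = a) :
    (Module.finrank ℂ (commUT (Nmat σ)) : ℤ) =
      ((n * (n + 1) / 2 : ℕ) : ℤ) -
        ((k * n : ℤ) - (∑ s : Fin k, (((j s : ℕ) : ℤ) - ((i s : ℕ) : ℤ))) -
          ∑ s : Fin k,
            (((Finset.univ.filter fun p : Fin k => i p < i s ∧ j p < j s).card : ℤ) +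
             ((Finset.univ.filter fun p : Fin k => ((j p : ℕ) < (i s : ℕ))).card : ℤ))) :=
  stmt1_general n k σ hσ i j hij hmono hcyc hfix
end

section
/- For every involution σ of {1,…,n} and all 1 ≤ i ≤ j ≤ n, the rank of the submatrix π_{i,j}(N_σ) equals the number of indices a with i ≤ a < σ(a) ≤ j; that is, (R_σ)_{i,j} is the number of ones of the matrix N_σ lying weakly below-left of position (i,j) (rows ≥ i and columns ≤ j). -/
open Matrix

/-- the rank of `π_{i,j}(N_σ)` counts the indices `a` with `i ≤ a < σ(a) ≤ j`
(1-based positions). -/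
theorem stmt3 (n : ℕ) (hn : 1 ≤ n) (σ : Equiv.Perm (Fin n)) (hσ : IsInvol σ)
    (i j : ℕ) (h1 : 1 ≤ i) (h2 : i ≤ j) (h3 : j ≤ n) :
    (blk (Nmat σ) i j h1 h2 h3).rank =
      (Finset.univ.filter fun a : Fin n =>
        i ≤ (a : ℕ) + 1 ∧ a < σ a ∧ ((σ a : Fin n) : ℕ) + 1 ≤ j).card := by
  classical
  have hσ' : ∀ x, σ (σ x) = x := fun x => by
    have := Equiv.ext_iff.mp hσ x
    simpa using this
  set k := j + 1 - i with hk
  let c : Fin k → Fin n := fun b => ⟨i - 1 + b.1, by have := b.2; omega⟩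
  have hcval : ∀ b : Fin k, (c b : ℕ) = i - 1 + b.1 := fun b => rfl
  set M := blk (Nmat σ) i j h1 h2 h3 with hM
  have hcb : ∀ b : Fin k, (c b : ℕ) + 1 ≤ j := by
    intro b; have := b.2; rw [hcval]; omega
  have hMe : ∀ a b : Fin k, M a b = if (c a : ℕ) < (c b : ℕ) ∧ σ (c a) = c b then 1 else 0 := by
    intro a b
    simp only [hM, blk, Nmat, Matrix.of_apply]
    congr 1
  let C : Fin k → Prop := fun b => ((σ (c b) : ℕ) < (c b : ℕ) ∧ i - 1 ≤ (σ (c b) : ℕ))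
  let d : Fin k → ℂ := fun b => if C b then 1 else 0
  have hCiff : ∀ a b : Fin k, ((c a : ℕ) < (c b : ℕ) ∧ σ (c a) = c b) → (C b ∧ σ (c b) = c a) := by
    intro a b ⟨hlt, heq⟩
    have hs : σ (c b) = c a := by rw [← heq, hσ']
    refine ⟨⟨?_, ?_⟩, hs⟩
    · rw [hs]; exact hlt
    · rw [hs, hcval]; omega
  -- M * diagonal d = M
  have hMD : M * Matrix.diagonal d = M := by
    ext a b
    rw [Matrix.mul_diagonal, hMe a b]
    by_cases h : (c a : ℕ) < (c b : ℕ) ∧ σ (c a) = c b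
    · rw [if_pos h]
      show (1 : ℂ) * (if C b then 1 else 0) = 1
      rw [if_pos (hCiff a b h).1, one_mul]
    · rw [if_neg h]
      exact zero_mul _
  -- Mᵀ * M = diagonal d
  have hMtM : Mᵀ * M = Matrix.diagonal d := by
    ext b b'
    rw [Matrix.mul_apply, Matrix.diagonal_apply]
    by_cases hC : C b
    · have hle : i - 1 ≤ (σ (c b) : ℕ) := hC.2
      have hlt : (σ (c b) : ℕ) < (c b : ℕ) := hC.1
      have hbk : (c b : ℕ) = i - 1 + b.1 := hcval b
      set a₀ : Fin k := ⟨(σ (c b) : ℕ) - (i - 1), by have := b.2; omega⟩ with ha₀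
      have hca₀ : c a₀ = σ (c b) := by
        apply Fin.ext
        rw [hcval]
        show i - 1 + ((σ (c b) : ℕ) - (i - 1)) = _
        omega
      have hM₀ : M a₀ b = 1 := by
        rw [hMe]
        have hs : σ (c a₀) = c b := by rw [hca₀, hσ']
        rw [if_pos ⟨by rw [hca₀]; exact hlt, hs⟩]
      rw [Finset.sum_eq_single a₀]
      · by_cases hbb : b = b'
        · subst hbb
          rw [if_pos rfl]
          simp only [Matrix.transpose_apply, hM₀, one_mul]
          show (1 : ℂ) = if C b then 1 else 0
          rw [if_pos hC]
        · rw [if_neg hbb]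
          have hz : M a₀ b' = 0 := by
            rw [hMe, if_neg]
            rintro ⟨-, h2'⟩
            have hcc : c b = c b' := by rw [← hσ' (c b), ← hca₀, h2']
            refine hbb (Fin.ext ?_)
            have := Fin.ext_iff.mp hcc
            rw [hcval, hcval] at this
            omega
          rw [Matrix.transpose_apply, hz, mul_zero]
      · intro a _ hne
        have hz : M a b = 0 := by
          rw [hMe, if_neg]
          rintro ⟨hlt', heq⟩
          apply hne
          have : c a = σ (c b) := by rw [← heq, hσ']
          apply Fin.ext
          have h2 := Fin.ext_iff.mp this
          rw [hcval] at h2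
          show a.1 = (σ (c b) : ℕ) - (i - 1)
          omega
        rw [Matrix.transpose_apply, hz, zero_mul]
      · intro h; exact absurd (Finset.mem_univ a₀) h
    · have hz : ∀ a : Fin k, M a b = 0 := by
        intro a
        rw [hMe, if_neg]
        intro h
        exact hC (hCiff a b h).1
      have hterm : ∀ a : Fin k, Mᵀ b a * M a b' = 0 := fun a => by
        rw [Matrix.transpose_apply, hz a, zero_mul]
      rw [Finset.sum_congr rfl (fun a _ => hterm a), Finset.sum_const_zero]
      by_cases hbb : b = b'
      · subst hbb
        rw [if_pos rfl]
        show (0 : ℂ) = if C b then 1 else 0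
        rw [if_neg hC]
      · rw [if_neg hbb]
  -- rank M = rank diagonal d
  have hrank : M.rank = (Matrix.diagonal d).rank := by
    apply le_antisymm
    · conv_lhs => rw [← hMD]
      exact Matrix.rank_mul_le_right M (Matrix.diagonal d)
    · rw [← hMtM]
      exact Matrix.rank_mul_le_right Mᵀ M
  rw [hrank, Matrix.rank_diagonal]
  rw [Fintype.card_subtype]
  have hdC : ∀ b : Fin k, d b ≠ 0 ↔ C b := by
    intro b
    show (if C b then (1 : ℂ) else 0) ≠ 0 ↔ C b
    constructor
    · intro hne
      by_contra h
      exact hne (if_neg h)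
    · intro h
      rw [if_pos h]
      exact one_ne_zero
  rw [Finset.filter_congr (fun b _ => by rw [hdC])]
  -- bijection
  apply Finset.card_bij (fun b _ => σ (c b))
  · intro b hb
    rw [Finset.mem_filter] at hb ⊢
    obtain ⟨-, hlt, hle⟩ := hb
    have := hcb b
    refine ⟨Finset.mem_univ _, by omega, ?_, ?_⟩
    · rw [Fin.lt_def, hσ' (c b)]; exact hlt
    · rw [hσ' (c b)]; exact this
  · intro b hb b' hb' heq
    have hcc : c b = c b' := σ.injective heq
    apply Fin.ext
    have := Fin.ext_iff.mp hcc
    rw [hcval, hcval] at this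
    omega
  · intro a ha
    rw [Finset.mem_filter] at ha
    obtain ⟨-, hi, hlt, hle⟩ := ha
    rw [Fin.lt_def] at hlt
    refine ⟨⟨(σ a : ℕ) - (i - 1), by omega⟩, ?_, ?_⟩
    · rw [Finset.mem_filter]
      have hc : c ⟨(σ a : ℕ) - (i - 1), by omega⟩ = σ a := by
        apply Fin.ext
        rw [hcval]
        show i - 1 + ((σ a : ℕ) - (i - 1)) = _
        omega
      refine ⟨Finset.mem_univ _, ?_, ?_⟩
      · rw [hc, hσ']; exact hlt
      · rw [hc, hσ']; omega
    · have hc : c ⟨(σ a : ℕ) - (i - 1), by omega⟩ = σ a := by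
        apply Fin.ext
        rw [hcval]
        show i - 1 + ((σ a : ℕ) - (i - 1)) = _
        omega
      rw [hc, hσ']
end

section
/- For every involution σ of {1,…,n}, the rank matrix R_σ satisfies conditions (i), (ii) and (iii). -/
open Matrix

/-- Conditions (i)–(iii) on a (1-based) `n×n` natural-number matrix, entries outside
`{1,…,n}²` being read as `0`. -/
def RConds (n : ℕ) (R : ℕ → ℕ → ℕ) : Prop :=
  (∀ i j, 1 ≤ i → i ≤ n → 1 ≤ j → j ≤ n → j ≤ i → R i j = 0) ∧
  (∀ i j, 1 ≤ i → i < j → j ≤ n →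
    R (i + 1) j ≤ R i j ∧ R i j ≤ R (i + 1) j + 1 ∧
    R i (j - 1) ≤ R i j ∧ R i j ≤ R i (j - 1) + 1) ∧
  (∀ i j, 1 ≤ i → i < j → j ≤ n →
    R i j = R (i + 1) j + 1 → R i j = R i (j - 1) + 1 → R i j = R (i + 1) (j - 1) + 1 →
    ((∀ k, 1 ≤ k → k < j → R i k = R (i + 1) k) ∧
     (∀ k, j ≤ k → k ≤ n → R i k = R (i + 1) k + 1) ∧
     (∀ k, i < k → k ≤ n → R k j = R k (j - 1)) ∧
     (∀ k, 1 ≤ k → k ≤ i → R k j = R k (j - 1) + 1) ∧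
     (∀ k, 1 ≤ k → k ≤ n → R j k = R (j + 1) k ∧ R k i = R k (i - 1))))


/-!
`N_σ` is the matrix of the partial bijection `a ↦ σ a` on `{a | a < σ a}`, and restricting a
partial-permutation matrix to a window of rows and columns gives again a partial-permutation
matrix, whose rank is the size of its domain. So `rank π_{i,j}(N_σ)` is the number of arcs
`a < σ a` of `σ` lying inside `{i,…,j}`. Moving one end of the window by one step changes this
count by the number of arcs with that end point, which is `0` or `1`; this gives (i) and (ii).
Under the hypotheses of (iii), the arc starting at `i` and the arc ending at `j` must coincide,
so `σ i = j`; every difference in (iii) is then read off from this single arc, and since `σ` is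
an involution, `σ j = i < j`, so no arc starts at `j` and none ends at `i`.
-/

open Finset

namespace PEquiv

variable {α β γ δ K : Type*}

noncomputable def ofInjective {e : β → α} (he : Function.Injective e) : β ≃. α where
  toFun b := some (e b)
  invFun := Function.partialInv e
  inv a b := (he.isPartialInv a b).trans Option.some_inj.symm

lemma ofInjective_apply {e : β → α} (he : Function.Injective e) (b : β) :
    ofInjective he b = some (e b) :=
  rfl

lemma ofSet_isSome_trans_self (f : α ≃. β) : (ofSet {a | (f a).isSome}).trans f = f := by
  ext1 a
  cases h : f a <;> simp [PEquiv.trans, ofSet, h]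

lemma toMatrix_ofSet [DecidableEq α] [Zero K] [One K] (s : Set α) [DecidablePred (· ∈ s)] :
    ((ofSet s).toMatrix : Matrix α α K) = Matrix.diagonal fun a => if a ∈ s then 1 else 0 := by
  ext a b
  by_cases hab : a = b
  · subst hab
    simp [toMatrix_apply]
  · simp [toMatrix_apply, Ne.symm hab, hab]

theorem toMatrix_submatrix [DecidableEq γ] [DecidableEq δ] [Zero K] [One K] (f : α ≃. γ)
    {e : β → α} {e' : δ → γ} (he : Function.Injective e) (he' : Function.Injective e') :
    (f.toMatrix : Matrix α γ K).submatrix e e' =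
      (((ofInjective he).trans f).trans (ofInjective he').symm).toMatrix := by
  ext b d
  simp only [Matrix.submatrix_apply, toMatrix_apply]
  refine if_congr ?_ rfl rfl
  simp only [Option.mem_def, trans_eq_some, ofInjective_apply, Option.some.injEq, exists_eq_left',
    eq_some_iff, exists_eq_right']

theorem rank_toMatrix [Fintype α] [Fintype β] [DecidableEq α] [DecidableEq β] [Field K]
    (f : α ≃. β) : (f.toMatrix : Matrix α β K).rank = #{a | (f a).isSome} := by
  classical
  have hdom : ((ofSet {a | (f a).isSome}).toMatrix : Matrix α α K) =
      (f.toMatrix : Matrix α β K) * (f.symm.toMatrix : Matrix β α K) := by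
    rw [← toMatrix_trans, self_trans_symm]
  have hf : (f.toMatrix : Matrix α β K) =
      ((ofSet {a | (f a).isSome}).toMatrix : Matrix α α K) * (f.toMatrix : Matrix α β K) := by
    rw [← toMatrix_trans, ofSet_isSome_trans_self]
  have hrank : (f.toMatrix : Matrix α β K).rank =
      ((ofSet {a | (f a).isSome}).toMatrix : Matrix α α K).rank :=
    le_antisymm (hf ▸ Matrix.rank_mul_le_left _ _) (hdom ▸ Matrix.rank_mul_le_left _ _)
  rw [hrank, toMatrix_ofSet, Matrix.rank_diagonal, Fintype.card_subtype]
  simp [Option.ne_none_iff_isSome]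

theorem rank_submatrix_toMatrix [Fintype β] [Fintype δ] [DecidableEq β] [DecidableEq γ]
    [DecidableEq δ] [Field K] (f : α ≃. γ) {e : β → α} {e' : δ → γ}
    (he : Function.Injective e) (he' : Function.Injective e') :
    ((f.toMatrix : Matrix α γ K).submatrix e e').rank = #{b | ∃ d, f (e b) = some (e' d)} := by
  rw [toMatrix_submatrix f he he', rank_toMatrix]
  congr 1
  ext b
  simp [Option.isSome_iff_exists, trans_eq_some, eq_some_iff, ofInjective_apply]

end PEquiv

lemma RConds.congr {n : ℕ} {R R' : ℕ → ℕ → ℕ} (h : ∀ i j, 1 ≤ i → j ≤ n → R i j = R' i j)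
    (hR' : RConds n R') : RConds n R := by
  obtain ⟨h1, h2, h3⟩ := hR'
  refine ⟨fun i j hi hin hj hjn hji => ?_, fun i j hi hij hjn => ?_,
    fun i j hi hij hjn hrow hcol hcorner => ?_⟩
  · rw [h i j hi hjn]
    exact h1 i j hi hin hj hjn hji
  · simp (disch := omega) only [h]
    exact h2 i j hi hij hjn
  · simp (disch := omega) only [h] at hrow hcol hcorner
    simp +contextual (disch := omega) only [h]
    exact h3 i j hi hij hjn hrow hcol hcorner

lemma exists_fin_val_add_one_eq {n i : ℕ} (hi : 1 ≤ i) (hin : i ≤ n) :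
    ∃ a : Fin n, (a : ℕ) + 1 = i :=
  ⟨⟨i - 1, by omega⟩, Nat.sub_add_cancel hi⟩

section Arcs

variable {n : ℕ} (σ : Equiv.Perm (Fin n))

def upperArcs : Fin n ≃. Fin n :=
  (PEquiv.ofSet {a | a < σ a}).trans σ.toPEquiv

lemma upperArcs_eq_some {a b : Fin n} : upperArcs σ a = some b ↔ a < σ a ∧ σ a = b := by
  simp [upperArcs, PEquiv.trans_eq_some]

lemma nmat_eq_toMatrix : Nmat σ = (upperArcs σ).toMatrix := by
  ext a b
  by_cases hab : σ a = b <;> simp [Nmat, PEquiv.toMatrix_apply, upperArcs_eq_some, hab]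

/-- Positions are 1-based, as in `Rfun`: `a : Fin n` sits at position `a + 1`. -/
def arcCount (i j : ℕ) : ℕ :=
  #{a : Fin n | (a : ℕ) < σ a ∧ i ≤ a + 1 ∧ (σ a : ℕ) + 1 ≤ j}

theorem rank_blk_nmat {i j : ℕ} (h1 : 1 ≤ i) (h2 : i ≤ j) (h3 : j ≤ n) :
    (blk (Nmat σ) i j h1 h2 h3).rank = arcCount σ i j := by
  let e : Fin (j + 1 - i) → Fin n := fun p => ⟨i - 1 + p, by omega⟩
  have he : Function.Injective e := fun p q h => Fin.ext (by simpa [e] using h)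
  rw [show blk (Nmat σ) i j h1 h2 h3 = (Nmat σ).submatrix e e from rfl, nmat_eq_toMatrix,
    PEquiv.rank_submatrix_toMatrix _ he he, arcCount]
  refine Finset.card_nbij e (fun p hp => ?_) he.injOn (fun a ha => ?_)
  · simp only [mem_coe, mem_filter, mem_univ, true_and, upperArcs_eq_some] at hp ⊢
    obtain ⟨q, hlt, hq⟩ := hp
    have hq' : (σ (e p) : ℕ) = i - 1 + q := congrArg Fin.val hq
    have hp' : (e p : ℕ) = i - 1 + p := rfl
    have := q.2
    rw [Fin.lt_def] at hlt
    omega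
  · simp only [mem_coe, mem_filter, mem_univ, true_and] at ha
    have he_sub : ∀ (b : Fin n) (hb : i ≤ b + 1) (hb' : (b : ℕ) + 1 ≤ j),
        e ⟨b - (i - 1), by omega⟩ = b :=
      fun b hb hb' => Fin.ext (by simp [e]; omega)
    refine ⟨_, ?_, he_sub a ha.2.1 (by omega)⟩
    simp only [mem_coe, mem_filter, mem_univ, true_and, upperArcs_eq_some,
      he_sub a ha.2.1 (by omega)]
    exact ⟨_, ha.1, (he_sub (σ a) (by omega) ha.2.2).symm⟩

lemma arcCount_eq_zero_of_le {i j : ℕ} (h : j ≤ i) : arcCount σ i j = 0 := by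
  rw [arcCount, card_eq_zero, filter_eq_empty_iff]
  intro a _ ha
  omega

lemma rfun_eq_arcCount {i j : ℕ} (hi : 1 ≤ i) (hj : j ≤ n) : Rfun σ i j = arcCount σ i j := by
  unfold Rfun
  split_ifs with h
  · exact rank_blk_nmat σ h.1 h.2.1.le h.2.2
  · exact (arcCount_eq_zero_of_le σ (by omega)).symm

lemma arcCount_left_step {i : ℕ} (j : ℕ) {a : Fin n} (ha : (a : ℕ) + 1 = i) :
    arcCount σ i j =
      arcCount σ (i + 1) j + if (a : ℕ) < σ a ∧ (σ a : ℕ) + 1 ≤ j then 1 else 0 := by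
  have hsplit : ∀ x : Fin n,
      (if (x : ℕ) < σ x ∧ i ≤ x + 1 ∧ (σ x : ℕ) + 1 ≤ j then 1 else 0) =
        (if (x : ℕ) < σ x ∧ i + 1 ≤ x + 1 ∧ (σ x : ℕ) + 1 ≤ j then 1 else 0) +
          if a = x then (if (a : ℕ) < σ a ∧ (σ a : ℕ) + 1 ≤ j then 1 else 0) else 0 := by
    intro x
    by_cases hx : a = x
    · subst hx
      split_ifs <;> omega
    · have : (a : ℕ) ≠ x := Fin.val_ne_of_ne hx
      split_ifs <;> omega
  simp only [arcCount, card_filter, hsplit, sum_add_distrib, sum_ite_eq, mem_univ, if_true]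

lemma arcCount_right_step (i : ℕ) {j : ℕ} {b : Fin n} (hb : (b : ℕ) + 1 = j) :
    arcCount σ i j =
      arcCount σ i (j - 1) + if (σ.symm b : ℕ) < b ∧ i ≤ (σ.symm b : ℕ) + 1 then 1 else 0 := by
  have hsplit : ∀ x : Fin n,
      (if (x : ℕ) < σ x ∧ i ≤ x + 1 ∧ (σ x : ℕ) + 1 ≤ j then 1 else 0) =
        (if (x : ℕ) < σ x ∧ i ≤ x + 1 ∧ (σ x : ℕ) + 1 ≤ j - 1 then 1 else 0) +
          if σ.symm b = x then
            (if (σ.symm b : ℕ) < b ∧ i ≤ (σ.symm b : ℕ) + 1 then 1 else 0) else 0 := by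
    intro x
    by_cases hx : σ.symm b = x
    · subst hx
      simp only [Equiv.apply_symm_apply, if_true]
      split_ifs <;> omega
    · have : (b : ℕ) ≠ σ x := Fin.val_ne_of_ne fun h => hx (by rw [h, Equiv.symm_apply_apply])
      simp only [hx, if_false]
      split_ifs <;> omega
  simp only [arcCount, card_filter, hsplit, sum_add_distrib, sum_ite_eq, mem_univ, if_true]

lemma symm_apply_eq_of_arcCount_corner {i j : ℕ} {a b : Fin n} (ha : (a : ℕ) + 1 = i)
    (hb : (b : ℕ) + 1 = j) (hrow : arcCount σ i j = arcCount σ (i + 1) j + 1)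
    (hcol : arcCount σ i j = arcCount σ i (j - 1) + 1)
    (hcorner : arcCount σ i j = arcCount σ (i + 1) (j - 1) + 1) : σ.symm b = a := by
  have hleft := arcCount_left_step σ j ha
  have hright := arcCount_right_step σ i hb
  have hright' := arcCount_right_step σ (i + 1) hb
  split_ifs at hleft hright hright' <;> omega

theorem rConds_arcCount (hσ : IsInvol σ) : RConds n (arcCount σ) := by
  have hinv : σ.symm = σ := inv_eq_of_mul_eq_one_right hσ
  refine ⟨fun i j _ _ _ _ hji => arcCount_eq_zero_of_le σ hji, fun i j hi hij hjn => ?_,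
    fun i j hi hij hjn hrow hcol hcorner => ?_⟩
  all_goals
    obtain ⟨a, ha⟩ := exists_fin_val_add_one_eq hi (show i ≤ n by omega)
    obtain ⟨b, hb⟩ := exists_fin_val_add_one_eq (show 1 ≤ j by omega) hjn
  · have hleft := arcCount_left_step σ j ha
    have hright := arcCount_right_step σ i hb
    split_ifs at hleft hright <;> omega
  · have hba : σ.symm b = a := symm_apply_eq_of_arcCount_corner σ ha hb hrow hcol hcorner
    have hab : σ a = b := by rw [← hba, Equiv.apply_symm_apply]
    have hab' : σ.symm a = b := by rw [hinv, hab]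
    have hba' : σ b = a := by rw [← hinv, hba]
    refine ⟨fun k _ hk => ?_, fun k hk _ => ?_, fun k hk _ => ?_, fun k _ hk => ?_,
      fun k _ _ => ⟨?_, ?_⟩⟩
    · rw [arcCount_left_step σ k ha, hab, if_neg (by omega), add_zero]
    · rw [arcCount_left_step σ k ha, hab, if_pos (by omega)]
    · rw [arcCount_right_step σ k hb, hba, if_neg (by omega), add_zero]
    · rw [arcCount_right_step σ k hb, hba, if_pos (by omega)]
    · rw [arcCount_left_step σ k hb, hba', if_neg (by omega), add_zero]
    · rw [arcCount_right_step σ k ha, hab', if_neg (by omega), add_zero]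

end Arcs

theorem stmt4_general (n : ℕ) (σ : Equiv.Perm (Fin n)) (hσ : IsInvol σ) :
    RConds n (Rfun σ) :=
  RConds.congr (fun _ _ hi hj => rfun_eq_arcCount σ hi hj) (rConds_arcCount σ hσ)

/-- the rank matrix of every involution satisfies conditions (i)–(iii). -/
theorem stmt4 (n : ℕ) (hn : 1 ≤ n) (σ : Equiv.Perm (Fin n)) (hσ : IsInvol σ) :
    RConds n (Rfun σ) :=
  stmt4_general n σ hσ
end

section
/- Every n×n natural-number matrix R satisfying conditions (i), (ii) and (iii) is the rank matrix of an involution: there exists an involution σ of {1,…,n} with R = R_σ. -/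
open Matrix

/-! Call `(a, b)` a corner of `R` when the premise of (iii) holds there. Condition (iii) puts at
most one corner in each row and each column, and never uses the column of a corner as the row of
another, so pairing the two ends of each corner defines an involution `σ`. Peeling off one row at a
time with (iii)(a) shows that `R i j` counts the corners `(a, b)` with `i ≤ a` and `b ≤ j`, and
`π_{i,j}(N_σ)` is a 0-1 matrix with at most one `1` per column whose nonzero rows are the rows
of those corners, so its rank is the same count. -/

section Partner

variable {α : Type*} (r : α → α → Prop)

open Classical in
noncomputable def partner (x : α) : α := if h : ∃ y, r x y then h.choose else x

variable {r}

theorem partner_eq_of_rel (huniq : ∀ x y z, r x y → r x z → y = z) {x y : α} (h : r x y) :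
    partner r x = y := by
  have hex : ∃ y, r x y := ⟨y, h⟩
  rw [partner, dif_pos hex]
  exact huniq _ _ _ hex.choose_spec h

theorem partner_eq_self {x : α} (h : ∀ y, ¬ r x y) : partner r x = x := by
  rw [partner, dif_neg (not_exists.mpr h)]

theorem partner_involutive (hsymm : ∀ x y, r x y → r y x)
    (huniq : ∀ x y z, r x y → r x z → y = z) : Function.Involutive (partner r) := by
  intro x
  by_cases hx : ∃ y, r x y
  · obtain ⟨y, hxy⟩ := hx
    rw [partner_eq_of_rel huniq hxy, partner_eq_of_rel huniq (hsymm x y hxy)]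
  · rw [partner_eq_self (not_exists.mp hx), partner_eq_self (not_exists.mp hx)]

end Partner

theorem Matrix.rank_of_boole_eq_card {ι ι' K : Type*} [Fintype ι] [Fintype ι'] [DecidableEq ι]
    [Field K] (P : ι → ι' → Prop) [∀ a b, Decidable (P a b)]
    [DecidablePred fun a => ∃ b, P a b]
    (hcol : ∀ a a' b, P a b → P a' b → a = a') :
    (Matrix.of fun a b => if P a b then (1 : K) else 0).rank
      = (Finset.univ.filter fun a => ∃ b, P a b).card := by
  set M : Matrix ι ι' K := Matrix.of fun a b => if P a b then 1 else 0
  set S := Finset.univ.filter fun a => ∃ b, P a b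
  have col_of_rel : ∀ a b, P a b → M.col b = Pi.single a 1 := by
    intro a b hab
    ext a'
    by_cases ha' : a' = a
    · subst ha'; simp [M, hab]
    · simpa [M, Pi.single_eq_of_ne ha'] using fun h => ha' (hcol _ _ _ h hab)
  have col_of_not_rel : ∀ b, (∀ a, ¬ P a b) → M.col b = 0 := by
    intro b hb
    ext a
    simp [M, hb a]
  have hspan : Submodule.span K (Set.range M.col)
      = Submodule.span K (Set.range fun a : S => Pi.single (a : ι) (1 : K)) := by
    apply le_antisymm <;> rw [Submodule.span_le]
    · rintro _ ⟨b, rfl⟩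
      by_cases hb : ∃ a, P a b
      · obtain ⟨a, hab⟩ := hb
        rw [col_of_rel a b hab]
        exact Submodule.subset_span ⟨⟨a, by simpa [S] using ⟨b, hab⟩⟩, rfl⟩
      · rw [col_of_not_rel b (not_exists.mp hb)]
        exact Submodule.zero_mem _
    · rintro _ ⟨⟨a, ha⟩, rfl⟩
      obtain ⟨b, hab⟩ := (Finset.mem_filter.mp ha).2
      exact Submodule.subset_span ⟨b, col_of_rel a b hab⟩
  rw [rank_eq_finrank_span_cols, hspan, ← Fintype.card_coe]
  exact finrank_span_eq_card ((Pi.linearIndependent_single_one ι K).comp _ Subtype.val_injective)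

def VanishesOutside (n : ℕ) (R : ℕ → ℕ → ℕ) : Prop :=
  ∀ i j, i = 0 ∨ j = 0 ∨ n < i ∨ n < j → R i j = 0

def IsRankCorner (n : ℕ) (R : ℕ → ℕ → ℕ) (a b : ℕ) : Prop :=
  1 ≤ a ∧ a < b ∧ b ≤ n ∧ R a b = R (a + 1) b + 1 ∧ R a b = R a (b - 1) + 1 ∧
    R a b = R (a + 1) (b - 1) + 1

instance (n : ℕ) (R : ℕ → ℕ → ℕ) (a b : ℕ) : Decidable (IsRankCorner n R a b) := by
  unfold IsRankCorner; infer_instance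

-- `Fin n` is 0-based while `R` is 1-based.
def IsRankCornerPair (n : ℕ) (R : ℕ → ℕ → ℕ) (x y : Fin n) : Prop :=
  IsRankCorner n R (x.1 + 1) (y.1 + 1) ∨ IsRankCorner n R (y.1 + 1) (x.1 + 1)

namespace RConds

variable {n : ℕ} {R : ℕ → ℕ → ℕ}

theorem eq_zero_of_le (hR : RConds n R) (hsupp : VanishesOutside n R) {i j : ℕ} (h : j ≤ i) :
    R i j = 0 := by
  by_cases hj : j = 0
  · exact hsupp i j (Or.inr (Or.inl hj))
  by_cases hi : n < i
  · exact hsupp i j (Or.inr (Or.inr (Or.inl hi)))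
  · exact hR.1 i j (by omega) (by omega) (by omega) (by omega) h

theorem row_of_isRankCorner (hR : RConds n R) {a b : ℕ} (hc : IsRankCorner n R a b) {k : ℕ}
    (hk₁ : 1 ≤ k) (hk₂ : k ≤ n) : R a k = R (a + 1) k + if b ≤ k then 1 else 0 := by
  obtain ⟨ha, hab, hb, e₁, e₂, e₃⟩ := hc
  have h := hR.2.2 a b ha hab hb e₁ e₂ e₃
  split_ifs with hbk
  · exact h.2.1 k hbk hk₂
  · exact h.1 k hk₁ (by omega)

theorem isRankCorner_row_unique (hR : RConds n R) {a b b' : ℕ} (hc : IsRankCorner n R a b)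
    (hc' : IsRankCorner n R a b') : b = b' := by
  have h := hR.row_of_isRankCorner hc (hc'.1.trans hc'.2.1.le) hc'.2.2.1
  have h' := hR.row_of_isRankCorner hc' (hc.1.trans hc.2.1.le) hc.2.2.1
  have e := hc.2.2.2.1
  have e' := hc'.2.2.2.1
  split_ifs at h h' <;> omega

theorem isRankCorner_col_unique (hR : RConds n R) {a a' b : ℕ} (hc : IsRankCorner n R a b)
    (hc' : IsRankCorner n R a' b) : a = a' := by
  suffices ∀ x y, IsRankCorner n R x b → IsRankCorner n R y b → ¬ x < y by
    exact le_antisymm (not_lt.mp (this a' a hc' hc)) (not_lt.mp (this a a' hc hc'))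
  rintro x y ⟨hx, hxb, hb, e₁, e₂, e₃⟩ ⟨-, hyb, -, -, e, -⟩ hxy
  have := (hR.2.2 x b hx hxb hb e₁ e₂ e₃).2.2.1 y hxy (by omega)
  omega

theorem not_isRankCorner_of_isRankCorner (hR : RConds n R) {a b c : ℕ}
    (hc : IsRankCorner n R a b) : ¬ IsRankCorner n R b c := by
  obtain ⟨ha, hab, hb, e₁, e₂, e₃⟩ := hc
  rintro ⟨-, hbc, hc, e, -, -⟩
  have := ((hR.2.2 a b ha hab hb e₁ e₂ e₃).2.2.2.2 c (by omega) hc).1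
  omega

theorem row_of_forall_not_isRankCorner (hR : RConds n R) (hsupp : VanishesOutside n R) {a : ℕ}
    (ha : 1 ≤ a) (hnc : ∀ b, ¬ IsRankCorner n R a b) (k : ℕ) : R a k = R (a + 1) k := by
  induction k with
  | zero => rw [hR.eq_zero_of_le hsupp (Nat.zero_le a), hR.eq_zero_of_le hsupp (Nat.zero_le _)]
  | succ k ih =>
    by_cases hk : a < k + 1 ∧ k + 1 ≤ n
    · have h := hR.2.1 a (k + 1) ha hk.1 hk.2
      have h' : R (a + 1) k ≤ R (a + 1) (k + 1) := by
        by_cases hak : a + 1 < k + 1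
        · exact (hR.2.1 (a + 1) (k + 1) (by omega) hak hk.2).2.2.1
        · rw [hR.eq_zero_of_le hsupp (by omega : k ≤ a + 1)]; exact Nat.zero_le _
      simp only [Nat.add_sub_cancel] at h
      -- rows `a` and `a + 1` agree up to column `k`, so a jump at `k + 1` would be a corner
      by_contra hne
      exact hnc (k + 1) ⟨ha, hk.1, hk.2, by omega, by rw [Nat.add_sub_cancel]; omega,
        by rw [Nat.add_sub_cancel]; omega⟩
    · by_cases hka : k + 1 ≤ a
      · rw [hR.eq_zero_of_le hsupp hka, hR.eq_zero_of_le hsupp (by omega : k + 1 ≤ a + 1)]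
      · rw [hsupp a (k + 1) (by omega), hsupp (a + 1) (k + 1) (by omega)]

theorem row_eq_add_ite (hR : RConds n R) (hsupp : VanishesOutside n R) {a k : ℕ} (ha : 1 ≤ a)
    (hk : k ≤ n) : R a k = R (a + 1) k + if ∃ b ≤ k, IsRankCorner n R a b then 1 else 0 := by
  by_cases hex : ∃ b, IsRankCorner n R a b
  · obtain ⟨b, hb⟩ := hex
    by_cases hk₁ : 1 ≤ k
    · have hiff : (∃ b' ≤ k, IsRankCorner n R a b') ↔ b ≤ k :=
        ⟨fun ⟨b', hb'k, hb'⟩ => hR.isRankCorner_row_unique hb hb' ▸ hb'k, fun h => ⟨b, h, hb⟩⟩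
      rw [hR.row_of_isRankCorner hb hk₁ hk, if_congr hiff rfl rfl]
    · have hnot : ¬ ∃ b' ≤ k, IsRankCorner n R a b' := fun ⟨b', hb'k, hb'⟩ => by
        have := hb'.2.1; omega
      rw [if_neg hnot, hR.eq_zero_of_le hsupp (by omega : k ≤ a),
        hR.eq_zero_of_le hsupp (by omega : k ≤ a + 1)]
  · push Not at hex
    rw [if_neg fun ⟨b, _, hb⟩ => hex b hb, add_zero]
    exact hR.row_of_forall_not_isRankCorner hsupp ha hex k

theorem eq_card_isRankCorner (hR : RConds n R) (hsupp : VanishesOutside n R) {i j : ℕ}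
    (hi : 1 ≤ i) (hj : j ≤ n) :
    R i j = ((Finset.Icc i n).filter fun a => ∃ b ≤ j, IsRankCorner n R a b).card := by
  by_cases hin : i ≤ n
  · rw [← Finset.insert_Icc_add_one_left_eq_Icc hin, Finset.filter_insert,
      hR.row_eq_add_ite hsupp hi hj, hR.eq_card_isRankCorner hsupp (by omega : 1 ≤ i + 1) hj]
    split_ifs
    · rw [Finset.card_insert_of_notMem (by simp)]
    · rfl
  · rw [hsupp i j (by omega), Finset.Icc_eq_empty (by omega), Finset.filter_empty,
      Finset.card_empty]
termination_by n + 1 - i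


theorem isRankCornerPair_unique (hR : RConds n R) (x y z : Fin n)
    (hy : IsRankCornerPair n R x y) (hz : IsRankCornerPair n R x z) : y = z := by
  rcases hy with hy | hy <;> rcases hz with hz | hz
  · exact Fin.ext (by have := hR.isRankCorner_row_unique hy hz; omega)
  · exact (hR.not_isRankCorner_of_isRankCorner hz hy).elim
  · exact (hR.not_isRankCorner_of_isRankCorner hy hz).elim
  · exact Fin.ext (by have := hR.isRankCorner_col_unique hy hz; omega)

noncomputable def cornerInvolution (hR : RConds n R) : Equiv.Perm (Fin n) :=
  (partner_involutive (fun _ _ => Or.symm) hR.isRankCornerPair_unique).toPerm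

theorem isInvol_cornerInvolution (hR : RConds n R) : IsInvol hR.cornerInvolution :=
  Equiv.ext (partner_involutive (fun _ _ => Or.symm) hR.isRankCornerPair_unique)

theorem nmat_cornerInvolution (hR : RConds n R) :
    Nmat hR.cornerInvolution
      = Matrix.of fun a b : Fin n => if IsRankCorner n R (a.1 + 1) (b.1 + 1) then 1 else 0 := by
  ext a b
  refine if_congr ⟨fun ⟨hab, hσ⟩ => ?_, fun hc => ⟨?_, ?_⟩⟩ rfl rfl
  · by_cases hex : ∃ y, IsRankCornerPair n R a y
    · obtain ⟨y, hy⟩ := hex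
      have hyb : y = b := (partner_eq_of_rel hR.isRankCornerPair_unique hy).symm.trans hσ
      subst hyb
      exact hy.resolve_right fun hc => by have := hc.2.1; have : a.1 < y.1 := hab; omega
    · have := (partner_eq_self (not_exists.mp hex)).symm.trans hσ
      exact absurd hab (by rw [this]; exact lt_irrefl b)
  · exact Fin.lt_def.mpr (by have := hc.2.1; omega)
  · exact partner_eq_of_rel hR.isRankCornerPair_unique (Or.inl hc)

theorem rfun_cornerInvolution (hR : RConds n R) (hsupp : VanishesOutside n R) {i j : ℕ}
    (h : 1 ≤ i ∧ i < j ∧ j ≤ n) : Rfun hR.cornerInvolution i j = R i j := by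
  rw [Rfun, dif_pos h]
  have hblk : blk (Nmat hR.cornerInvolution) i j h.1 h.2.1.le h.2.2
      = Matrix.of fun a b : Fin (j + 1 - i) =>
          if IsRankCorner n R (i + a) (i + b) then (1 : ℂ) else 0 := by
    ext a b
    simp only [blk, hR.nmat_cornerInvolution, Matrix.of_apply]
    congr 2 <;> omega
  rw [hblk, Matrix.rank_of_boole_eq_card _ fun a a' b ha ha' =>
      Fin.ext (by have := hR.isRankCorner_col_unique ha ha'; omega),
    hR.eq_card_isRankCorner hsupp h.1 h.2.2]
  refine Finset.card_bij (fun a _ => i + a) ?_ ?_ ?_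
  · intro a ha
    obtain ⟨b, hb⟩ := (Finset.mem_filter.mp ha).2
    have := hb.2.1
    have := hb.2.2.1
    exact Finset.mem_filter.mpr ⟨Finset.mem_Icc.mpr ⟨by omega, by omega⟩, i + b, by omega, hb⟩
  · intro a _ a' _ h
    exact Fin.ext (by omega)
  · intro a ha
    obtain ⟨hai, b, hbj, hb⟩ := Finset.mem_filter.mp ha
    have := Finset.mem_Icc.mp hai
    have := hb.2.1
    refine ⟨⟨a - i, by omega⟩, Finset.mem_filter.mpr ⟨Finset.mem_univ _, ⟨b - i, by omega⟩, ?_⟩,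
      by simp only; omega⟩
    simpa only [Nat.add_sub_cancel' (by omega : i ≤ a), Nat.add_sub_cancel' (by omega : i ≤ b)]

end RConds

theorem stmt5_general (n : ℕ) (R : ℕ → ℕ → ℕ)
    (hsupp : ∀ i j, i = 0 ∨ j = 0 ∨ n < i ∨ n < j → R i j = 0)
    (hR : RConds n R) :
    ∃ σ : Equiv.Perm (Fin n), IsInvol σ ∧ ∀ i j, R i j = Rfun σ i j := by
  refine ⟨hR.cornerInvolution, hR.isInvol_cornerInvolution, fun i j => ?_⟩
  by_cases h : 1 ≤ i ∧ i < j ∧ j ≤ n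
  · exact (hR.rfun_cornerInvolution hsupp h).symm
  · rw [Rfun, dif_neg h]
    by_cases hji : j ≤ i
    · exact hR.eq_zero_of_le hsupp hji
    · exact hsupp i j (by omega)

/-- every matrix satisfying conditions (i)–(iii) is the rank matrix of an
involution. -/
theorem stmt5 (n : ℕ) (hn : 1 ≤ n) (R : ℕ → ℕ → ℕ)
    (hsupp : ∀ i j, i = 0 ∨ j = 0 ∨ n < i ∨ n < j → R i j = 0)
    (hR : RConds n R) :
    ∃ σ : Equiv.Perm (Fin n), IsInvol σ ∧ ∀ i j, R i j = Rfun σ i j :=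
  stmt5_general n R hsupp hR
end

section
/- The map σ ↦ R_σ is injective on involutions: if σ and τ are involutions of {1,…,n} with R_σ = R_τ, then σ = τ. Consequently the entrywise order ⪯ restricted to rank matrices of involutions is a partial order on the set of involutions. -/
open Matrix

/-!
The `(i, j)` entry of the rank matrix of an involution `σ` counts the arcs `c < σ c` of `σ`
lying in `[i, j]`: the block `π_{i,j}(N_σ)` is a partial permutation matrix, with one nonzero
row for each such arc. Hence `R_σ(i, j) - R_σ(i + 1, j)` is `1` exactly when `i < σ i ≤ j`, which
determines `σ i` whenever `i < σ i`. An involution is determined by its arcs.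
-/

open Finset

theorem Matrix.rank_of_partialPerm {K m k : Type*} [Field K] [Fintype m] [Fintype k]
    [DecidableEq k] (R : m → k → Prop) [DecidableRel R]
    (hrow : ∀ a b b', R a b → R a b' → b = b') (hcol : ∀ a a' b, R a b → R a' b → a = a') :
    (of fun a b => if R a b then (1 : K) else 0).rank = #{a | ∃ b, R a b} := by
  set A : Matrix m k K := of fun a b => if R a b then 1 else 0
  let col : {a // ∃ b, R a b} → k := fun a => a.2.choose
  have hcolR : ∀ a, R a.1 (col a) := fun a => a.2.choose_spec
  let rows : {a // ∃ b, R a b} → k → K := fun a => A a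
  have hA : ∀ a : {a // ∃ b, R a b}, A a = Pi.single (col a) 1 := by
    intro a
    funext b
    by_cases hb : b = col a
    · simpa [A, hb] using hcolR a
    · simp only [A, of_apply, Pi.single_eq_of_ne hb, ite_eq_right_iff, one_ne_zero, imp_false]
      exact fun h => hb (hrow _ _ _ h (hcolR a))
  have hA₀ : ∀ a, (¬∃ b, R a b) → A a = 0 := by
    intro a ha
    funext b
    simp only [A, of_apply, Pi.zero_apply, ite_eq_right_iff, one_ne_zero, imp_false]
    exact fun h => ha ⟨b, h⟩
  have hspan : Submodule.span K (Set.range A) = Submodule.span K (Set.range rows) := by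
    refine le_antisymm ?_ (Submodule.span_mono (by rintro _ ⟨a, rfl⟩; exact ⟨a, rfl⟩))
    rw [← Submodule.span_insert_zero (s := Set.range rows)]
    refine Submodule.span_mono ?_
    rintro _ ⟨a, rfl⟩
    by_cases ha : ∃ b, R a b
    · exact Or.inr ⟨⟨a, ha⟩, rfl⟩
    · exact Or.inl (hA₀ a ha)
  have hli : LinearIndependent K rows := by
    have hcol : Function.Injective col := fun a a' h =>
      Subtype.ext (hcol _ _ _ (hcolR a) (h ▸ hcolR a'))
    convert (Pi.basisFun K k).linearIndependent.comp col hcol using 1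
    funext a
    simp [rows, hA]
  rw [rank_eq_finrank_span_row, Matrix.row, hspan, finrank_span_eq_card hli, Fintype.card_subtype]

namespace Equiv.Perm

variable {n : ℕ}

-- 0-based: the arcs `c → σ c` with `c < σ c` and both ends in `[i, j]`.
def arcCount (σ : Perm (Fin n)) (i j : ℕ) : ℕ :=
  #{c : Fin n | i ≤ (c : ℕ) ∧ c < σ c ∧ (σ c : ℕ) ≤ j}

theorem arcCount_eq_succ_add (σ : Perm (Fin n)) (x : Fin n) (j : ℕ) :
    arcCount σ x j = arcCount σ (x + 1) j + if x < σ x ∧ (σ x : ℕ) ≤ j then 1 else 0 := by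
  simp only [arcCount, card_filter]
  have hx := Fintype.sum_ite_eq' x fun c => if c < σ c ∧ (σ c : ℕ) ≤ j then 1 else 0
  rw [← hx, ← sum_add_distrib]
  refine sum_congr rfl fun c _ => ?_
  have : c = x ↔ (c : ℕ) = x := Fin.val_inj.symm
  split_ifs <;> omega

theorem arcCount_of_le (σ : Perm (Fin n)) {i j : ℕ} (hji : j ≤ i) : arcCount σ i j = 0 := by
  rw [arcCount, card_eq_zero, filter_eq_empty_iff]
  rintro c - ⟨hi, hc, hj⟩
  exact absurd (Fin.lt_def.mp hc) (by omega)

theorem arc_iff_of_arcCount_eq {σ τ : Perm (Fin n)}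
    (h : ∀ i, ∀ j < n, σ.arcCount i j = τ.arcCount i j) (x y : Fin n) :
    x < σ x ∧ σ x ≤ y ↔ x < τ x ∧ τ x ≤ y := by
  have hx := σ.arcCount_eq_succ_add x y
  rw [h x y y.2, h (x + 1) y y.2, τ.arcCount_eq_succ_add x y] at hx
  simp only [Fin.le_def]
  split_ifs at hx <;> first | tauto | omega

theorem apply_eq_of_arcCount_eq {σ τ : Perm (Fin n)}
    (h : ∀ i, ∀ j < n, σ.arcCount i j = τ.arcCount i j) {x : Fin n} (hx : x < σ x) :
    τ x = σ x := by
  have hτx := (arc_iff_of_arcCount_eq h x (σ x)).mp ⟨hx, le_rfl⟩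
  exact le_antisymm hτx.2 ((arc_iff_of_arcCount_eq h x (τ x)).mpr ⟨hτx.1, le_rfl⟩).2

end Equiv.Perm

open Equiv

theorem Rfun_succ_succ {n : ℕ} (σ : Perm (Fin n)) (i : ℕ) {j : ℕ} (hj : j < n) :
    Rfun σ (i + 1) (j + 1) = σ.arcCount i j := by
  by_cases hij : i < j
  swap
  · rw [Rfun, dif_neg (by omega), σ.arcCount_of_le (by omega)]
  rw [Rfun, dif_pos ⟨by omega, by omega, by omega⟩]
  let e : Fin (j + 1 + 1 - (i + 1)) → Fin n := fun r => ⟨i + r, by omega⟩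
  have he : Function.Injective e := fun r s h => Fin.ext (by simpa [e] using h)
  have hblk : blk (Nmat σ) (i + 1) (j + 1) (by omega) (by omega) (by omega) =
      of fun r s => if e r < e s ∧ σ (e r) = e s then (1 : ℂ) else 0 := rfl
  rw [hblk, Matrix.rank_of_partialPerm]
  · refine card_nbij e ?_ he.injOn ?_
    · simp only [Set.MapsTo, coe_filter, mem_univ, true_and, Set.mem_ofPred_eq]
      rintro r ⟨s, hrs, hs⟩
      have := s.2
      rw [hs]
      simp only [e, Fin.lt_def] at hrs ⊢
      omega
    · intro c hc
      simp only [coe_filter, mem_univ, true_and, Set.mem_ofPred_eq] at hc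
      have hce : e ⟨c - i, by omega⟩ = c := Fin.ext (by simp [e]; omega)
      refine ⟨⟨c - i, by omega⟩, ?_, hce⟩
      simp only [coe_filter, mem_univ, true_and, Set.mem_ofPred_eq, hce]
      refine ⟨⟨σ c - i, by omega⟩, ?_, Fin.ext ?_⟩ <;> simp [e, Fin.lt_def] <;> omega
  · rintro r s s' ⟨-, hs⟩ ⟨-, hs'⟩
    exact he (hs.symm.trans hs')
  · rintro r r' s ⟨-, hs⟩ ⟨-, hs'⟩
    exact he (σ.injective (hs.trans hs'.symm))

namespace IsInvol

variable {n : ℕ} {σ τ : Perm (Fin n)}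

theorem apply_apply_s6 (hσ : IsInvol σ) (x : Fin n) : σ (σ x) = x :=
  congrArg (· x) hσ

theorem apply_eq_of_forall_lt_apply (hσ : IsInvol σ) (hτ : IsInvol τ)
    (h : ∀ x, x < σ x → τ x = σ x) {x : Fin n} (hx : σ x ≠ x) : τ x = σ x := by
  rcases lt_or_gt_of_ne hx.symm with hlt | hgt
  · exact h x hlt
  · have hσx : τ (σ x) = x := by
      rw [h (σ x) (by rwa [hσ.apply_apply_s6]), hσ.apply_apply_s6]
    calc τ x = τ (τ (σ x)) := by rw [hσx]
      _ = σ x := hτ.apply_apply_s6 _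

theorem eq_of_forall_lt_apply (hσ : IsInvol σ) (hτ : IsInvol τ)
    (hστ : ∀ x, x < σ x → τ x = σ x) (hτσ : ∀ x, x < τ x → σ x = τ x) : σ = τ := by
  ext x
  by_cases hσx : σ x = x
  · by_cases hτx : τ x = x
    · rw [hσx, hτx]
    · rw [apply_eq_of_forall_lt_apply hτ hσ hτσ hτx]
  · rw [apply_eq_of_forall_lt_apply hσ hτ hστ hσx]

theorem eq_of_arcCount_eq (hσ : IsInvol σ) (hτ : IsInvol τ)
    (h : ∀ i, ∀ j < n, σ.arcCount i j = τ.arcCount i j) : σ = τ :=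
  eq_of_forall_lt_apply hσ hτ (fun _ => Perm.apply_eq_of_arcCount_eq h)
    (fun _ => Perm.apply_eq_of_arcCount_eq fun i j hj => (h i j hj).symm)

end IsInvol

theorem stmt6_general (n : ℕ) :
    (∀ σ τ : Equiv.Perm (Fin n), IsInvol σ → IsInvol τ →
      (∀ i j, Rfun σ i j = Rfun τ i j) → σ = τ) ∧
    (∀ σ τ : Equiv.Perm (Fin n), IsInvol σ → IsInvol τ →
      (∀ i j, Rfun σ i j ≤ Rfun τ i j) → (∀ i j, Rfun τ i j ≤ Rfun σ i j) → σ = τ) := by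
  have injective : ∀ σ τ : Equiv.Perm (Fin n), IsInvol σ → IsInvol τ →
      (∀ i j, Rfun σ i j = Rfun τ i j) → σ = τ := fun σ τ hσ hτ hR =>
    hσ.eq_of_arcCount_eq hτ fun i j hj => by
      rw [← Rfun_succ_succ σ i hj, ← Rfun_succ_succ τ i hj, hR]
  exact ⟨injective, fun σ τ hσ hτ hστ hτσ =>
    injective σ τ hσ hτ fun i j => (hστ i j).antisymm (hτσ i j)⟩

/-- `σ ↦ R_σ` is injective on involutions; consequently the entrywise order
on rank matrices is a partial order on involutions (antisymmetry). -/
theorem stmt6 (n : ℕ) (hn : 1 ≤ n) :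
    (∀ σ τ : Equiv.Perm (Fin n), IsInvol σ → IsInvol τ →
      (∀ i j, Rfun σ i j = Rfun τ i j) → σ = τ) ∧
    (∀ σ τ : Equiv.Perm (Fin n), IsInvol σ → IsInvol τ →
      (∀ i j, Rfun σ i j ≤ Rfun τ i j) → (∀ i j, Rfun τ i j ≤ Rfun σ i j) → σ = τ) :=
  stmt6_general n
end

section
/- Let σ be an involution of {1,…,n} and 1 ≤ i ≤ j ≤ n. Define the involution π_{i,j}(σ) of {1,…,n} by π_{i,j}(σ)(a) = σ(a) if both a and σ(a) lie in {i,…,j}, and π_{i,j}(σ)(a) = a otherwise. Then for all s, t with i ≤ s ≤ t ≤ j one has rank(π_{s,t}(N_σ)) = rank(π_{s,t}(N_{π_{i,j}(σ)})); in particular the principal submatrix π_{i,j}(R_σ) of the rank matrix R_σ coincides with the corresponding rank matrix of the involution π_{i,j}(σ), and hence is itself the rank matrix of an involution of a set of j−i+1 elements. Moreover π_{i,j}(N_σ) = π_{i,j}(N_{π_{i,j}(σ)}), and R_{π_{i,j}(σ)} ⪯ R_σ. -/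
open Matrix

/-!
Cutting an involution `σ` down to the window `W = {i,…,j}` keeps exactly the arcs `a ↦ σ a`
with both ends in `W`, so `N_{π_{i,j}(σ)} = D N_σ D`, where `D` is the diagonal `0/1` projection
onto `W`. Every window submatrix of `N` inside `W` is untouched by `D`, and on any window the
submatrix of `D N_σ D` is that of `N_σ` multiplied by diagonal matrices on both sides, which
cannot increase its rank.
-/

open Function

theorem isInvol_iff_involutive {n : ℕ} {σ : Equiv.Perm (Fin n)} :
    IsInvol σ ↔ Involutive σ := by
  simp [IsInvol, Involutive, Equiv.ext_iff]

section Restriction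

variable {α : Type*} (p : α → Prop) [DecidablePred p]

/-- The paper's `π_{i,j}(σ)` when `p` is the window `{i,…,j}`. -/
def restrictInvolution (σ : α → α) : α → α :=
  fun a => if p a ∧ p (σ a) then σ a else a

theorem Function.Involutive.restrictInvolution {σ : α → α} (hσ : Involutive σ) :
    Involutive (restrictInvolution p σ) := by
  intro a
  by_cases h : p a ∧ p (σ a)
  · simp [_root_.restrictInvolution, h, hσ a]
  · simp only [_root_.restrictInvolution, if_neg h]

theorem Nmat_eq_diagonal_mul_mul_diagonal_of_restrictInvolution {n : ℕ} {p : Fin n → Prop}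
    [DecidablePred p] {σ τ : Equiv.Perm (Fin n)} (hτ : ⇑τ = restrictInvolution p σ) :
    Nmat τ = diagonal (fun a => if p a then 1 else 0) * Nmat σ *
      diagonal (fun a => if p a then 1 else 0) := by
  ext a b
  rw [mul_diagonal, diagonal_mul]
  by_cases hab : a < b
  · simp only [Nmat, of_apply, hτ, restrictInvolution, hab, true_and]
    split_ifs <;> simp_all [hab.ne]
  · simp [Nmat, hab]

end Restriction

theorem Matrix.submatrix_diagonal_mul_mul_diagonal {l m R : Type*} [Fintype l] [Fintype m]
    [DecidableEq l] [DecidableEq m] [NonUnitalNonAssocSemiring R]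
    (d : m → R) (x : Matrix m m R) (e : l → m) :
    (diagonal d * x * diagonal d).submatrix e e =
      diagonal (d ∘ e) * x.submatrix e e * diagonal (d ∘ e) := by
  ext a b
  simp [mul_diagonal, diagonal_mul]

def blkIndex {n : ℕ} (s t : ℕ) (h1 : 1 ≤ s) (h3 : t ≤ n) : Fin (t + 1 - s) → Fin n :=
  fun a => ⟨s - 1 + a.1, by have := a.2; omega⟩

section Window

variable {n : ℕ} (s t : ℕ) (h1 : 1 ≤ s) (h2 : s ≤ t) (h3 : t ≤ n)

theorem blk_eq_submatrix (x : Matrix (Fin n) (Fin n) ℂ) :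
    blk x s t h1 h2 h3 = x.submatrix (blkIndex s t h1 h3) (blkIndex s t h1 h3) := rfl

theorem rank_blk_diagonal_mul_mul_diagonal_le (d : Fin n → ℂ) (x : Matrix (Fin n) (Fin n) ℂ) :
    (blk (diagonal d * x * diagonal d) s t h1 h2 h3).rank ≤ (blk x s t h1 h2 h3).rank := by
  rw [blk_eq_submatrix, blk_eq_submatrix, submatrix_diagonal_mul_mul_diagonal]
  exact (rank_mul_le_left _ _).trans (rank_mul_le_right _ _)

theorem blk_diagonal_mul_mul_diagonal_of_eq_one {d : Fin n → ℂ}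
    (hd : ∀ a : Fin n, s ≤ (a : ℕ) + 1 → (a : ℕ) + 1 ≤ t → d a = 1)
    (x : Matrix (Fin n) (Fin n) ℂ) :
    blk (diagonal d * x * diagonal d) s t h1 h2 h3 = blk x s t h1 h2 h3 := by
  have hd' : d ∘ blkIndex s t h1 h3 = fun _ => 1 := funext fun a => by
    have := a.2
    exact hd _ (by simp only [blkIndex]; omega) (by simp only [blkIndex]; omega)
  rw [blk_eq_submatrix, blk_eq_submatrix, submatrix_diagonal_mul_mul_diagonal, hd',
    diagonal_one, mul_one, one_mul]

end Window

theorem stmt8_general (n : ℕ) (σ τ : Equiv.Perm (Fin n)) (hσ : IsInvol σ)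
    (i j : ℕ) (hi : 1 ≤ i) (hij : i ≤ j) (hj : j ≤ n)
    (hτ1 : ∀ a : Fin n,
      (i ≤ (a : ℕ) + 1 ∧ (a : ℕ) + 1 ≤ j ∧ i ≤ ((σ a : Fin n) : ℕ) + 1 ∧
        ((σ a : Fin n) : ℕ) + 1 ≤ j) → τ a = σ a)
    (hτ2 : ∀ a : Fin n,
      ¬(i ≤ (a : ℕ) + 1 ∧ (a : ℕ) + 1 ≤ j ∧ i ≤ ((σ a : Fin n) : ℕ) + 1 ∧
        ((σ a : Fin n) : ℕ) + 1 ≤ j) → τ a = a) :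
    IsInvol τ ∧
    (∀ (s t : ℕ) (hs : i ≤ s) (hst : s ≤ t) (ht : t ≤ j),
      (blk (Nmat σ) s t (hi.trans hs) hst (ht.trans hj)).rank =
      (blk (Nmat τ) s t (hi.trans hs) hst (ht.trans hj)).rank) ∧
    blk (Nmat σ) i j hi hij hj = blk (Nmat τ) i j hi hij hj ∧
    (∀ s t, Rfun τ s t ≤ Rfun σ s t) := by
  let p : Fin n → Prop := fun a => i ≤ (a : ℕ) + 1 ∧ (a : ℕ) + 1 ≤ j
  have hτ : ⇑τ = restrictInvolution p σ := funext fun a => by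
    unfold restrictInvolution
    split_ifs with h
    · exact hτ1 a ⟨h.1.1, h.1.2, h.2.1, h.2.2⟩
    · exact hτ2 a fun h' => h ⟨⟨h'.1, h'.2.1⟩, h'.2.2⟩
  have hN := Nmat_eq_diagonal_mul_mul_diagonal_of_restrictInvolution hτ
  have hblk : ∀ (s t : ℕ) (hs : i ≤ s) (hst : s ≤ t) (ht : t ≤ j),
      blk (Nmat σ) s t (hi.trans hs) hst (ht.trans hj) =
        blk (Nmat τ) s t (hi.trans hs) hst (ht.trans hj) := by
    intro s t hs hst ht
    rw [hN, blk_diagonal_mul_mul_diagonal_of_eq_one]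
    intro a has hat
    exact if_pos ⟨hs.trans has, hat.trans ht⟩
  refine ⟨?_, fun s t hs hst ht => by rw [hblk s t hs hst ht], hblk i j le_rfl hij le_rfl,
    fun s t => ?_⟩
  · rw [isInvol_iff_involutive, hτ]
    exact (isInvol_iff_involutive.1 hσ).restrictInvolution p
  · unfold Rfun
    split_ifs
    · rw [hN]
      exact rank_blk_diagonal_mul_mul_diagonal_le ..
    · exact le_rfl

/-- the restricted involution `π_{i,j}(σ)` has the same rank data as `σ`
inside the window `{i,…,j}`, the same submatrix `π_{i,j}(N)`, and `R_{π_{i,j}(σ)} ⪯ R_σ`. -/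
theorem stmt8 (n : ℕ) (hn : 1 ≤ n) (σ τ : Equiv.Perm (Fin n)) (hσ : IsInvol σ)
    (i j : ℕ) (hi : 1 ≤ i) (hij : i ≤ j) (hj : j ≤ n)
    (hτ1 : ∀ a : Fin n,
      (i ≤ (a : ℕ) + 1 ∧ (a : ℕ) + 1 ≤ j ∧ i ≤ ((σ a : Fin n) : ℕ) + 1 ∧
        ((σ a : Fin n) : ℕ) + 1 ≤ j) → τ a = σ a)
    (hτ2 : ∀ a : Fin n,
      ¬(i ≤ (a : ℕ) + 1 ∧ (a : ℕ) + 1 ≤ j ∧ i ≤ ((σ a : Fin n) : ℕ) + 1 ∧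
        ((σ a : Fin n) : ℕ) + 1 ≤ j) → τ a = a) :
    IsInvol τ ∧
    (∀ (s t : ℕ) (hs : i ≤ s) (hst : s ≤ t) (ht : t ≤ j),
      (blk (Nmat σ) s t (hi.trans hs) hst (ht.trans hj)).rank =
      (blk (Nmat τ) s t (hi.trans hs) hst (ht.trans hj)).rank) ∧
    blk (Nmat σ) i j hi hij hj = blk (Nmat τ) i j hi hij hj ∧
    (∀ s t, Rfun τ s t ≤ Rfun σ s t) :=
  stmt8_general n σ τ hσ i j hi hij hj hτ1 hτ2
end

section
/- Let σ and σ' be involutions of {1,…,n} and 1 ≤ i ≤ j ≤ n, and set m := j − i + 1. Define involutions δ and δ' of {1,…,m} by δ(a) = σ(a+i−1) − i + 1 if both a+i−1 and σ(a+i−1) lie in {i,…,j} and δ(a) = a otherwise (and similarly δ' from σ'). If the vanishing ideal of the intersection of the Zariski closures of B·N_σ and B·N_{σ'} (in the n×n setting) is a prime ideal, then the vanishing ideal of the intersection of the Zariski closures of B'·N_δ and B'·N_{δ'} (in the m×m setting, B' being the invertible upper-triangular m×m matrices) is a prime ideal. -/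
open Matrix

/-!
Restricting to the block of rows and columns `i, …, j` maps `B·N_σ` onto `B'·N_δ`: the block of
`b N_σ b⁻¹` is the block of `N_σ` conjugated by the block of `b`, and every `b'` lifts to a `b`
that is the identity off the block. Conversely, extending by zeros maps `B'·N_δ` into the
closure of `B·N_σ`: conjugation by `diag(t^w)`, with weights `w` constant on the block and
strictly decreasing elsewhere, multiplies `x p q` by `t^(w p - w q)`, which tends to `0` as
`t → 0` exactly off the block. Both maps are linear, so they carry the Zariski closures into
each other, and restriction undoes extension; hence the vanishing ideal of the small intersection
is the preimage of the big one under the comorphism of the restriction, and preimages of primes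
are prime.
-/

open Set Filter Topology Function

section

variable {m n : ℕ}

section VanishingIdeal

theorem stdBasis_repr_apply {R ι : Type*} [Semiring R] [Fintype ι] (x : Matrix ι ι R)
    (p : ι × ι) : (stdBasis R ι ι).repr x p = x p.1 p.2 := by
  simp [stdBasis]

noncomputable def linearPullback
    (φ : Matrix (Fin n) (Fin n) ℂ →ₗ[ℂ] Matrix (Fin m) (Fin m) ℂ) :
    MvPolynomial (Fin m × Fin m) ℂ →ₐ[ℂ] MvPolynomial (Fin n × Fin n) ℂ :=
  MvPolynomial.bind₁ (φ.toMvPolynomial (stdBasis ℂ _ _) (stdBasis ℂ _ _))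

theorem evalMat_linearPullback
    (φ : Matrix (Fin n) (Fin n) ℂ →ₗ[ℂ] Matrix (Fin m) (Fin m) ℂ) (x : Matrix (Fin n) (Fin n) ℂ)
    (f : MvPolynomial (Fin m × Fin m) ℂ) :
    evalMat x (linearPullback φ f) = evalMat (φ x) f := by
  simp only [evalMat, linearPullback, MvPolynomial.eval, MvPolynomial.eval₂Hom_bind₁]
  congr 2 with p
  have h := φ.toMvPolynomial_eval_eq_apply (stdBasis ℂ _ _) (stdBasis ℂ _ _) p
    ((stdBasis ℂ _ _).repr x)
  have hx : ⇑((stdBasis ℂ _ _).repr x) = fun q => x q.1 q.2 := funext (stdBasis_repr_apply x)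
  rwa [LinearEquiv.symm_apply_apply, stdBasis_repr_apply, hx] at h

theorem continuous_evalMat (f : MvPolynomial (Fin n × Fin n) ℂ) :
    Continuous fun x : Matrix (Fin n) (Fin n) ℂ => evalMat x f :=
  (MvPolynomial.continuous_eval f).comp (continuous_pi fun p => continuous_id.matrix_elem p.1 p.2)

theorem subset_zclosure (S : Set (Matrix (Fin n) (Fin n) ℂ)) : S ⊆ zclosure S :=
  fun _ hx _ hf => hf _ hx

theorem isClosed_zclosure (S : Set (Matrix (Fin n) (Fin n) ℂ)) : IsClosed (zclosure S) := by
  simp only [zclosure, ofPred_forall]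
  exact isClosed_iInter fun f => isClosed_iInter fun _ =>
    isClosed_eq (continuous_evalMat f) continuous_const

theorem closure_subset_zclosure (S : Set (Matrix (Fin n) (Fin n) ℂ)) : closure S ⊆ zclosure S :=
  closure_minimal (subset_zclosure S) (isClosed_zclosure S)

theorem mapsTo_zclosure (φ : Matrix (Fin n) (Fin n) ℂ →ₗ[ℂ] Matrix (Fin m) (Fin m) ℂ)
    {S : Set (Matrix (Fin n) (Fin n) ℂ)} {T : Set (Matrix (Fin m) (Fin m) ℂ)}
    (h : MapsTo φ S (zclosure T)) : MapsTo φ (zclosure S) (zclosure T) := by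
  intro x hx f hf
  rw [← evalMat_linearPullback]
  exact hx _ fun s hs => by rw [evalMat_linearPullback]; exact h hs f hf

theorem vanishingIdeal_eq_comap_of_leftInverse
    (φ : Matrix (Fin n) (Fin n) ℂ →ₗ[ℂ] Matrix (Fin m) (Fin m) ℂ)
    (ψ : Matrix (Fin m) (Fin m) ℂ → Matrix (Fin n) (Fin n) ℂ) (hφψ : LeftInverse φ ψ)
    {S : Set (Matrix (Fin n) (Fin n) ℂ)} {T : Set (Matrix (Fin m) (Fin m) ℂ)}
    (hφ : MapsTo φ S T) (hψ : MapsTo ψ T S) :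
    vanishingIdeal T = (vanishingIdeal S).comap (linearPullback φ) := by
  ext f
  rw [Ideal.mem_comap]
  constructor
  · intro hf x hx
    rw [evalMat_linearPullback]
    exact hf _ (hφ hx)
  · intro hf y hy
    rw [← hφψ y, ← evalMat_linearPullback]
    exact hf _ (hψ hy)

end VanishingIdeal

section Triangular

variable {b c u v x N : Matrix (Fin n) (Fin n) ℂ}

theorem UpperTri.mul (hu : UpperTri u) (hv : UpperTri v) : UpperTri (u * v) :=
  BlockTriangular.mul hu hv

theorem UpperTri.inv (hb : UpperTri b) : UpperTri b⁻¹ := by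
  by_cases h : IsUnit b
  · cases h.nonempty_invertible
    exact blockTriangular_inv_of_blockTriangular hb
  · rw [nonsing_inv_eq_ringInverse, Ring.inverse_non_unit _ h]
    exact fun _ _ _ => rfl

theorem StrictUpper.upperTri (hN : StrictUpper N) : UpperTri N :=
  fun a b hba => hN a b hba.le

theorem StrictUpper.upperTri_mul (hN : StrictUpper N) (hb : UpperTri b) : StrictUpper (b * N) := by
  intro p q hqp
  rw [mul_apply]
  refine Finset.sum_eq_zero fun k _ => ?_
  rcases lt_or_ge k p with h | h
  · rw [hb p k h, zero_mul]
  · rw [hN k q (hqp.trans h), mul_zero]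

theorem StrictUpper.mul_upperTri (hN : StrictUpper N) (hc : UpperTri c) : StrictUpper (N * c) := by
  intro p q hqp
  rw [mul_apply]
  refine Finset.sum_eq_zero fun k _ => ?_
  rcases le_or_gt k p with h | h
  · rw [hN p k h, zero_mul]
  · rw [hc k q (hqp.trans_lt h), mul_zero]

theorem strictUpper_Nmat (σ : Equiv.Perm (Fin n)) : StrictUpper (Nmat σ) :=
  fun _ _ hba => if_neg fun h => hba.not_gt h.1

theorem StrictUpper.of_mem_Borbit (hN : StrictUpper N) (hx : x ∈ Borbit N) : StrictUpper x := by
  obtain ⟨b, -, hb, rfl⟩ := hx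
  exact (hN.upperTri_mul hb).mul_upperTri hb.inv

theorem conj_mem_Borbit (hc : IsUnit c) (hcu : UpperTri c) (hx : x ∈ Borbit N) :
    c * x * c⁻¹ ∈ Borbit N := by
  obtain ⟨b, hb, hbu, rfl⟩ := hx
  exact ⟨c * b, hc.mul hb, hcu.mul hbu, by simp only [Matrix.mul_inv_rev, Matrix.mul_assoc]⟩

end Triangular

section Restriction

def submatrixLinearMap (R : Type*) [Semiring R] (e : Fin m → Fin n) :
    Matrix (Fin n) (Fin n) R →ₗ[R] Matrix (Fin m) (Fin m) R where
  toFun x := x.submatrix e e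
  map_add' _ _ := rfl
  map_smul' _ _ := rfl

noncomputable def extendZero (R : Type*) [Semiring R] (e : Fin m → Fin n) :
    Matrix (Fin m) (Fin m) R →ₗ[R] Matrix (Fin n) (Fin n) R where
  toFun y := of fun p q => extend (Prod.map e e) (fun ab => y ab.1 ab.2) 0 (p, q)
  map_add' y z := by
    ext p q
    have h := congrFun (Function.extend_add (Prod.map e e) (fun ab => y ab.1 ab.2)
      (fun ab => z ab.1 ab.2) 0 0) (p, q)
    rwa [add_zero] at h
  map_smul' r y := by
    ext p q
    have h := congrFun (Function.extend_smul r (Prod.map e e) (fun ab => y ab.1 ab.2) 0) (p, q)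
    rwa [smul_zero] at h

/-- `D` on the block `range e`, the identity elsewhere. -/
noncomputable def extendOne (R : Type*) [Ring R] (e : Fin m → Fin n)
    (D : Matrix (Fin m) (Fin m) R) : Matrix (Fin n) (Fin n) R :=
  extendZero R e D + (1 - extendZero R e 1)

variable {e : Fin m → Fin n}

section Semiring

variable {R : Type*} [Semiring R]

theorem extendZero_apply (y : Matrix (Fin m) (Fin m) R) (p q : Fin n) :
    extendZero R e y p q = extend (Prod.map e e) (fun ab => y ab.1 ab.2) 0 (p, q) :=
  rfl

theorem extendZero_apply_apply (he : Injective e) (y : Matrix (Fin m) (Fin m) R) (a b : Fin m) :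
    extendZero R e y (e a) (e b) = y a b :=
  (extendZero_apply y _ _).trans ((he.prodMap he).extend_apply _ _ (a, b))

theorem extendZero_apply_of_not_mem (y : Matrix (Fin m) (Fin m) R) {p q : Fin n}
    (h : ¬(p ∈ range e ∧ q ∈ range e)) : extendZero R e y p q = 0 :=
  (extendZero_apply y p q).trans <| extend_apply' _ _ (p, q) fun ⟨ab, hab⟩ =>
    h ⟨⟨ab.1, congrArg Prod.fst hab⟩, ⟨ab.2, congrArg Prod.snd hab⟩⟩

theorem submatrix_extendZero (he : Injective e) (y : Matrix (Fin m) (Fin m) R) :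
    (extendZero R e y).submatrix e e = y := by
  ext a b
  exact extendZero_apply_apply he y a b

theorem extendZero_mul (he : Injective e) (y z : Matrix (Fin m) (Fin m) R) :
    extendZero R e (y * z) = extendZero R e y * extendZero R e z := by
  ext p q
  rw [mul_apply]
  by_cases hpq : p ∈ range e ∧ q ∈ range e
  · obtain ⟨⟨a, rfl⟩, ⟨b, rfl⟩⟩ := hpq
    rw [extendZero_apply_apply he, mul_apply]
    refine Fintype.sum_of_injective e he _ _ (fun k hk => ?_) fun c => ?_
    · rw [extendZero_apply_of_not_mem y fun h => hk h.2, zero_mul]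
    · rw [extendZero_apply_apply he, extendZero_apply_apply he]
  · rw [extendZero_apply_of_not_mem _ hpq]
    refine (Finset.sum_eq_zero fun k _ => ?_).symm
    by_cases hp : p ∈ range e
    · rw [extendZero_apply_of_not_mem z fun h => hpq ⟨hp, h.2⟩, mul_zero]
    · rw [extendZero_apply_of_not_mem y fun h => hp h.1, zero_mul]

end Semiring

section Ring

variable {R : Type*} [Ring R]

theorem submatrix_extendOne (he : Injective e) (D : Matrix (Fin m) (Fin m) R) :
    (extendOne R e D).submatrix e e = D := by
  ext a b
  simp only [extendOne, submatrix_apply, Matrix.add_apply, Matrix.sub_apply,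
    extendZero_apply_apply he, one_apply, he.eq_iff, sub_self, add_zero]

theorem extendOne_mul (he : Injective e) (D E : Matrix (Fin m) (Fin m) R) :
    extendOne R e (D * E) = extendOne R e D * extendOne R e E := by
  have h := extendZero_mul (R := R) he
  simp only [extendOne, add_mul, mul_add, sub_mul, mul_sub, ← h, mul_one, one_mul]
  abel

theorem extendOne_one : extendOne R e 1 = 1 :=
  add_sub_cancel _ _

end Ring

variable {b u v x N : Matrix (Fin n) (Fin n) ℂ}

theorem UpperTri.submatrix (hb : UpperTri b) (he : StrictMono e) : UpperTri (b.submatrix e e) :=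
  fun _ _ h => hb _ _ (he h)

theorem UpperTri.extendZero {y : Matrix (Fin m) (Fin m) ℂ} (hy : UpperTri y) (he : StrictMono e) :
    UpperTri (extendZero ℂ e y) := by
  intro p q hqp
  by_cases hpq : p ∈ range e ∧ q ∈ range e
  · obtain ⟨⟨a, rfl⟩, ⟨b, rfl⟩⟩ := hpq
    rw [extendZero_apply_apply he.injective]
    exact hy a b (he.lt_iff_lt.1 hqp)
  · exact extendZero_apply_of_not_mem y hpq

theorem UpperTri.extendOne {D : Matrix (Fin m) (Fin m) ℂ} (hD : UpperTri D) (he : StrictMono e) :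
    UpperTri (extendOne ℂ e D) := by
  have h1 : UpperTri (1 : Matrix (Fin m) (Fin m) ℂ) := blockTriangular_one
  exact BlockTriangular.add (hD.extendZero he) (blockTriangular_one.sub (h1.extendZero he))

theorem submatrix_mul_of_upperTri (he : Injective e) (hR : (range e).OrdConnected)
    (hu : UpperTri u) (hv : UpperTri v) :
    (u * v).submatrix e e = u.submatrix e e * v.submatrix e e := by
  ext a b
  simp only [submatrix_apply, mul_apply]
  refine (Fintype.sum_of_injective e he _ _ (fun k hk => ?_) fun _ => rfl).symm
  rcases lt_or_ge k (e a) with h | h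
  · rw [hu _ _ h, zero_mul]
  rcases lt_or_ge (e b) k with h' | h'
  · rw [hv _ _ h', mul_zero]
  · exact absurd (hR.out (mem_range_self a) (mem_range_self b) ⟨h, h'⟩) hk

theorem submatrix_mul_submatrix_inv (he : Injective e) (hR : (range e).OrdConnected)
    (hb : IsUnit b) (hbu : UpperTri b) :
    b.submatrix e e * b⁻¹.submatrix e e = 1 := by
  rw [← submatrix_mul_of_upperTri he hR hbu hbu.inv,
    mul_nonsing_inv _ ((isUnit_iff_isUnit_det b).1 hb), submatrix_one _ he]

theorem submatrix_conj (he : Injective e) (hR : (range e).OrdConnected)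
    (hb : IsUnit b) (hbu : UpperTri b) (hN : UpperTri N) :
    (b * N * b⁻¹).submatrix e e =
      b.submatrix e e * N.submatrix e e * (b.submatrix e e)⁻¹ := by
  rw [submatrix_mul_of_upperTri he hR (hbu.mul hN) hbu.inv,
    submatrix_mul_of_upperTri he hR hbu hN,
    inv_eq_right_inv (submatrix_mul_submatrix_inv he hR hb hbu)]

theorem submatrix_mem_Borbit_submatrix (he : StrictMono e) (hR : (range e).OrdConnected)
    (hN : UpperTri N) (hx : x ∈ Borbit N) :
    x.submatrix e e ∈ Borbit (N.submatrix e e) := by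
  obtain ⟨b, hb, hbu, rfl⟩ := hx
  refine ⟨b.submatrix e e, ?_, hbu.submatrix he, submatrix_conj he.injective hR hb hbu hN⟩
  exact (isUnit_iff_isUnit_det _).2
    (isUnit_det_of_right_inverse (submatrix_mul_submatrix_inv he.injective hR hb hbu))

theorem exists_mem_Borbit_submatrix_eq (he : StrictMono e) (hR : (range e).OrdConnected)
    (hN : UpperTri N) {y : Matrix (Fin m) (Fin m) ℂ}
    (hy : y ∈ Borbit (N.submatrix e e)) : ∃ x ∈ Borbit N, x.submatrix e e = y := by
  obtain ⟨D, hD, hDu, rfl⟩ := hy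
  have hinv : extendOne ℂ e D * extendOne ℂ e D⁻¹ = 1 := by
    rw [← extendOne_mul he.injective, mul_nonsing_inv _ ((isUnit_iff_isUnit_det D).1 hD),
      extendOne_one]
  have hunit : IsUnit (extendOne ℂ e D) :=
    (isUnit_iff_isUnit_det _).2 (isUnit_det_of_right_inverse hinv)
  refine ⟨_, ⟨_, hunit, hDu.extendOne he, rfl⟩, ?_⟩
  rw [submatrix_conj he.injective hR hunit (hDu.extendOne he) hN, submatrix_extendOne he.injective]

end Restriction

section Degeneration

theorem exists_weight_of_ordConnected (R : Set (Fin n)) (hR : R.OrdConnected) :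
    ∃ w : Fin n → ℤ, (∀ p ∈ R, ∀ q ∈ R, w p = w q) ∧
      ∀ p q, p < q → ¬(p ∈ R ∧ q ∈ R) → w q < w p := by
  classical
  refine ⟨fun p => if p ∈ R then 0 else if ∃ r ∈ R, r < p then -p - n else n - p,
    fun p hp q hq => by simp only [if_pos hp, if_pos hq], fun p q hpq hnot => ?_⟩
  have hpq' : (p : ℕ) < q := hpq
  have hq := q.2
  by_cases hp : p ∈ R
  · have hq' : q ∉ R := fun hq' => hnot ⟨hp, hq'⟩
    simp only [if_pos hp, if_neg hq', if_pos (⟨p, hp, hpq⟩ : ∃ r ∈ R, r < q)]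
    omega
  by_cases hbelow : ∃ r ∈ R, r < p
  · obtain ⟨r, hr, hrp⟩ := hbelow
    have hq' : q ∉ R := fun hq' => hp (hR.out hr hq' ⟨hrp.le, hpq.le⟩)
    simp only [if_neg hp, if_neg hq', if_pos (⟨r, hr, hrp⟩ : ∃ r ∈ R, r < p),
      if_pos (⟨r, hr, hrp.trans hpq⟩ : ∃ r ∈ R, r < q)]
    omega
  · simp only [if_neg hp, if_neg hbelow]
    split_ifs <;> omega

theorem diagonal_zpow_conj_apply {t : ℂ} (ht : t ≠ 0) (w : Fin n → ℤ)
    (x : Matrix (Fin n) (Fin n) ℂ) (p q : Fin n) :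
    (diagonal (fun p => t ^ w p) * x * (diagonal fun p => t ^ w p)⁻¹) p q
      = x p q * t ^ (w p - w q) := by
  have hinv : (diagonal fun p => t ^ w p)⁻¹ = diagonal fun p => (t ^ w p)⁻¹ := by
    refine inv_eq_left_inv ?_
    rw [diagonal_mul_diagonal, ← diagonal_one]
    exact congrArg diagonal (funext fun p => inv_mul_cancel₀ (zpow_ne_zero _ ht))
  rw [hinv, mul_diagonal, diagonal_mul, zpow_sub₀ ht]
  ring

theorem tendsto_diagonal_zpow_conj {e : Fin m → Fin n} (he : Injective e) {w : Fin n → ℤ}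
    (hconst : ∀ p ∈ range e, ∀ q ∈ range e, w p = w q)
    (hlt : ∀ p q, p < q → ¬(p ∈ range e ∧ q ∈ range e) → w q < w p)
    {x : Matrix (Fin n) (Fin n) ℂ} (hx : StrictUpper x) :
    Tendsto (fun t : ℂ => diagonal (fun p => t ^ w p) * x * (diagonal fun p => t ^ w p)⁻¹)
      (𝓝[≠] 0) (𝓝 (extendZero ℂ e (x.submatrix e e))) := by
  refine tendsto_pi_nhds.2 fun p => tendsto_pi_nhds.2 fun q => ?_
  refine Tendsto.congr'
    (eventually_nhdsWithin_of_forall fun t ht => (diagonal_zpow_conj_apply ht w x p q).symm) ?_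
  by_cases hR : p ∈ range e ∧ q ∈ range e
  · obtain ⟨⟨a, rfl⟩, ⟨b, rfl⟩⟩ := hR
    rw [extendZero_apply_apply he, hconst _ (mem_range_self a) _ (mem_range_self b), sub_self]
    simpa only [submatrix_apply, zpow_zero, mul_one] using tendsto_const_nhds
  rw [extendZero_apply_of_not_mem _ hR]
  by_cases hx0 : x p q = 0
  · simpa only [hx0, zero_mul] using tendsto_const_nhds
  have hw := sub_pos.2 (hlt p q (lt_of_not_ge fun h => hx0 (hx p q h)) hR)
  have h : Tendsto (fun t : ℂ => x p q * t ^ (w p - w q)) (𝓝 0)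
      (𝓝 (x p q * 0 ^ (w p - w q))) :=
    (continuousAt_const.mul (continuousAt_zpow₀ _ _ (Or.inr hw.le))).tendsto
  rw [_root_.zero_zpow _ hw.ne', mul_zero] at h
  exact h.mono_left nhdsWithin_le_nhds

theorem extendZero_submatrix_mem_closure_Borbit {e : Fin m → Fin n} (he : StrictMono e)
    (hR : (range e).OrdConnected) {x N : Matrix (Fin n) (Fin n) ℂ} (hN : StrictUpper N)
    (hx : x ∈ Borbit N) : extendZero ℂ e (x.submatrix e e) ∈ closure (Borbit N) := by
  obtain ⟨w, hconst, hlt⟩ := exists_weight_of_ordConnected (range e) hR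
  refine mem_closure_of_tendsto
    (tendsto_diagonal_zpow_conj he.injective hconst hlt (hN.of_mem_Borbit hx))
    (eventually_nhdsWithin_of_forall fun t ht => conj_mem_Borbit ?_ (blockTriangular_diagonal _) hx)
  exact isUnit_diagonal.2 (Pi.isUnit_iff.2 fun _ => (zpow_ne_zero _ ht).isUnit)

end Degeneration

section OrbitClosure

variable {e : Fin m → Fin n}

theorem mapsTo_submatrix_zclosure_Borbit (he : StrictMono e) (hR : (range e).OrdConnected)
    {N : Matrix (Fin n) (Fin n) ℂ} (hN : UpperTri N) :
    MapsTo (submatrixLinearMap ℂ e) (zclosure (Borbit N)) (zclosure (Borbit (N.submatrix e e))) :=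
  mapsTo_zclosure _ fun _ hx => subset_zclosure _ (submatrix_mem_Borbit_submatrix he hR hN hx)

theorem mapsTo_extendZero_zclosure_Borbit (he : StrictMono e) (hR : (range e).OrdConnected)
    {N : Matrix (Fin n) (Fin n) ℂ} (hN : StrictUpper N) :
    MapsTo (extendZero ℂ e) (zclosure (Borbit (N.submatrix e e))) (zclosure (Borbit N)) :=
  mapsTo_zclosure _ fun _ hy => by
    obtain ⟨x, hx, rfl⟩ := exists_mem_Borbit_submatrix_eq he hR hN.upperTri hy
    exact closure_subset_zclosure _ (extendZero_submatrix_mem_closure_Borbit he hR hN hx)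

theorem isPrime_vanishingIdeal_inter_submatrix (he : StrictMono e) (hR : (range e).OrdConnected)
    {N N' : Matrix (Fin n) (Fin n) ℂ} (hN : StrictUpper N) (hN' : StrictUpper N')
    (hprime : (vanishingIdeal (zclosure (Borbit N) ∩ zclosure (Borbit N'))).IsPrime) :
    (vanishingIdeal (zclosure (Borbit (N.submatrix e e)) ∩
      zclosure (Borbit (N'.submatrix e e)))).IsPrime := by
  rw [vanishingIdeal_eq_comap_of_leftInverse (submatrixLinearMap ℂ e) (extendZero ℂ e)
    (submatrix_extendZero he.injective)
    ((mapsTo_submatrix_zclosure_Borbit he hR hN.upperTri).inter_inter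
      (mapsTo_submatrix_zclosure_Borbit he hR hN'.upperTri))
    ((mapsTo_extendZero_zclosure_Borbit he hR hN).inter_inter
      (mapsTo_extendZero_zclosure_Borbit he hR hN'))]
  exact hprime.comap _

theorem Nmat_submatrix (he : StrictMono e) {σ : Equiv.Perm (Fin n)} {δ : Equiv.Perm (Fin m)}
    (hδ : ∀ a b, a ≠ b → (δ a = b ↔ σ (e a) = e b)) :
    (Nmat σ).submatrix e e = Nmat δ := by
  ext a b
  simp only [submatrix_apply, Nmat, of_apply, he.lt_iff_lt]
  exact if_congr (and_congr_right fun h => (hδ a b h.ne).symm) rfl rfl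

end OrbitClosure

def shiftEmb (k : ℕ) (h : m + k ≤ n) (a : Fin m) : Fin n :=
  ⟨a + k, by omega⟩

theorem strictMono_shiftEmb {k : ℕ} (h : m + k ≤ n) : StrictMono (shiftEmb k h) :=
  fun a b hab => by simp only [shiftEmb, Fin.mk_lt_mk]; omega

theorem ordConnected_range_shiftEmb {k : ℕ} (h : m + k ≤ n) :
    (range (shiftEmb k h)).OrdConnected := by
  refine ⟨?_⟩
  rintro _ ⟨a, rfl⟩ _ ⟨b, rfl⟩ p ⟨hap, hpb⟩
  have := b.2
  simp only [shiftEmb, Fin.le_def] at hap hpb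
  exact ⟨⟨p - k, by omega⟩, Fin.ext (by simp only [shiftEmb]; omega)⟩

theorem eq_iff_apply_shiftEmb_eq {i j : ℕ} (hi : 1 ≤ i) (h : j + 1 - i + (i - 1) ≤ n)
    {σ : Equiv.Perm (Fin n)} {δ : Equiv.Perm (Fin (j + 1 - i))}
    (hδ : ∀ a, ((δ a : Fin (j + 1 - i)) : ℕ) =
      if i ≤ (σ (shiftEmb (i - 1) h a) : ℕ) + 1 ∧ (σ (shiftEmb (i - 1) h a) : ℕ) + 1 ≤ j
      then (σ (shiftEmb (i - 1) h a) : ℕ) - (i - 1) else a)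
    (a b : Fin (j + 1 - i)) (hab : a ≠ b) :
    δ a = b ↔ σ (shiftEmb (i - 1) h a) = shiftEmb (i - 1) h b := by
  have hδa := hδ a
  have hab' : (a : ℕ) ≠ b := Fin.val_ne_of_ne hab
  have hb := b.2
  rw [Fin.ext_iff, Fin.ext_iff]
  show _ ↔ _ = (b : ℕ) + (i - 1)
  split_ifs at hδa <;> omega

end

/-- irreducibility of the intersection passes to the restricted
involutions `π_{i,j}(σ)`, `π_{i,j}(σ')` in size `m = j − i + 1`. -/
theorem stmt14 (n : ℕ) (σ σ' : Equiv.Perm (Fin n))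
    (i j : ℕ) (hi : 1 ≤ i) (hij : i ≤ j) (hj : j ≤ n)
    (δ δ' : Equiv.Perm (Fin (j + 1 - i)))
    (hδ : ∀ a : Fin (j + 1 - i), ((δ a : Fin (j + 1 - i)) : ℕ) =
      if i ≤ ((σ ⟨(a : ℕ) + (i - 1), by have := a.2; omega⟩ : Fin n) : ℕ) + 1 ∧
         ((σ ⟨(a : ℕ) + (i - 1), by have := a.2; omega⟩ : Fin n) : ℕ) + 1 ≤ j
      then ((σ ⟨(a : ℕ) + (i - 1), by have := a.2; omega⟩ : Fin n) : ℕ) - (i - 1)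
      else (a : ℕ))
    (hδ' : ∀ a : Fin (j + 1 - i), ((δ' a : Fin (j + 1 - i)) : ℕ) =
      if i ≤ ((σ' ⟨(a : ℕ) + (i - 1), by have := a.2; omega⟩ : Fin n) : ℕ) + 1 ∧
         ((σ' ⟨(a : ℕ) + (i - 1), by have := a.2; omega⟩ : Fin n) : ℕ) + 1 ≤ j
      then ((σ' ⟨(a : ℕ) + (i - 1), by have := a.2; omega⟩ : Fin n) : ℕ) - (i - 1)
      else (a : ℕ))
    (hprime : (vanishingIdeal
      (zclosure (Borbit (Nmat σ)) ∩ zclosure (Borbit (Nmat σ')))).IsPrime) :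
    (vanishingIdeal
      (zclosure (Borbit (Nmat δ)) ∩ zclosure (Borbit (Nmat δ')))).IsPrime := by
  have h : j + 1 - i + (i - 1) ≤ n := by omega
  have he := strictMono_shiftEmb h
  rw [← Nmat_submatrix he (eq_iff_apply_shiftEmb_eq hi h hδ),
    ← Nmat_submatrix he (eq_iff_apply_shiftEmb_eq hi h hδ')]
  exact isPrime_vanishingIdeal_inter_submatrix he (ordConnected_range_shiftEmb h)
    (strictUpper_Nmat σ) (strictUpper_Nmat σ') hprime
end
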